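/- arXiv:1610.04506 — 10 statements merged into one kernel-verified Lean document; each statement's English description precedes it below -/
import Mathlib

section
/- Every almost discretely Lindelöf topological space is weakly linearly Lindelöf. -/
open Set Topology Cardinal

universe u

/-- `x` is a complete accumulation point of the family `𝒰`: every open neighborhood
of `x` meets `#𝒰`-many members of `𝒰`. -/
def IsCompleteAccPt {X : Type u} [TopologicalSpace X] (𝒰 : Set (Set X)) (x : X) : Prop :=
  ∀ V : Set X, IsOpen V → x ∈ V → #↥{U ∈ 𝒰 | (U ∩ V).Nonempty} = #↥𝒰

/-- A space is weakly linearly Lindelöf if every family of nonempty open sets of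
regular uncountable cardinality has a complete accumulation point. -/
def WeaklyLinearlyLindelof (X : Type u) [TopologicalSpace X] : Prop :=
  ∀ 𝒰 : Set (Set X), (∀ U ∈ 𝒰, IsOpen U ∧ U.Nonempty) →
    (#↥𝒰).IsRegular → ℵ₀ < #↥𝒰 → ∃ x : X, IsCompleteAccPt 𝒰 x

/-- A space is almost discretely Lindelöf if every discrete subset is contained
in a Lindelöf subset. -/
def AlmostDiscretelyLindelof (X : Type u) [TopologicalSpace X] : Prop :=
  ∀ D : Set X, DiscreteTopology D → ∃ L : Set X, D ⊆ L ∧ IsLindelof L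

/-!
Suppose the family `𝒰`, of regular uncountable cardinality `κ`, has no complete accumulation
point, and give every point `x` an open neighborhood `V x` meeting fewer than `κ` members of `𝒰`.
Choose by Zorn a maximal family of pairs `(x, U)` with `x ∈ U ∈ 𝒰` such that for any two of
them one set `U` misses the neighborhood `V` of the other point. By maximality and regularity
it has `κ` pairs, and its points form a discrete set. A Lindelöf set containing them is covered
by countably many `V x`, so by regularity one `V x` contains the points of `κ` pairs; it then
meets the `κ` distinct sets `U` of these pairs, a contradiction.
-/

theorem Cardinal.exists_le_mk_of_subset_iUnion {α ι : Type u} {κ : Cardinal.{u}}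
    (hκ : κ.IsRegular) {s : Set α} {t : ι → Set α} (hs : s ⊆ ⋃ i, t i) (hι : #ι < κ)
    (hκs : κ ≤ #s) : ∃ i, κ ≤ #(t i) := by
  by_contra! ht
  have hlt := (card_iUnion_lt_iff_forall_of_isRegular hκ hι).2 ht
  exact ((mk_le_mk_of_subset hs).trans_lt hlt).not_ge hκs

theorem exists_isOpen_mk_lt_of_not_isCompleteAccPt {X : Type u} [TopologicalSpace X]
    {𝒰 : Set (Set X)} {x : X} (hx : ¬IsCompleteAccPt 𝒰 x) :
    ∃ V, IsOpen V ∧ x ∈ V ∧ #{U ∈ 𝒰 | (U ∩ V).Nonempty} < #𝒰 := by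
  simp only [IsCompleteAccPt, not_forall] at hx
  obtain ⟨V, hVo, hxV, hne⟩ := hx
  exact ⟨V, hVo, hxV, (mk_le_mk_of_subset (sep_subset _ _)).lt_of_ne hne⟩

section SeparatedFamily

variable {X : Type u} {V : X → Set X} {𝒰 : Set (Set X)} {M : Set (X × Set X)}

def pointedMembers (𝒰 : Set (Set X)) : Set (X × Set X) :=
  {p | p.2 ∈ 𝒰 ∧ p.1 ∈ p.2}

def Separated (V : X → Set X) (p q : X × Set X) : Prop :=
  Disjoint p.2 (V q.1) ∨ Disjoint q.2 (V p.1)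

def SeparatedFamily (V : X → Set X) (𝒰 : Set (Set X)) (M : Set (X × Set X)) : Prop :=
  M ⊆ pointedMembers 𝒰 ∧ M.Pairwise (Separated V)

theorem exists_maximal_separatedFamily (V : X → Set X) (𝒰 : Set (Set X)) :
    ∃ M, Maximal (SeparatedFamily V 𝒰) M := by
  refine zorn_subset {M | SeparatedFamily V 𝒰 M} fun c hc hchain => ?_
  refine ⟨⋃₀ c, ⟨sUnion_subset fun M hM => (hc hM).1, ?_⟩, fun M => subset_sUnion_of_mem⟩
  exact (pairwise_sUnion hchain.directedOn).2 fun M hM => (hc hM).2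

variable (hV : ∀ x, x ∈ V x)
include hV

theorem SeparatedFamily.eq_of_mem_inter (hM : SeparatedFamily V 𝒰 M) {p q : X × Set X}
    (hp : p ∈ M) (hq : q ∈ M) (hqp : q.1 ∈ p.2 ∩ V p.1) : q = p := by
  by_contra hne
  rcases hM.2 hp hq (Ne.symm hne) with hdisj | hdisj
  · exact hdisj.notMem_of_mem_left hqp.1 (hV q.1)
  · exact hdisj.notMem_of_mem_left (hM.1 hq).2 hqp.2

theorem SeparatedFamily.injOn_snd (hM : SeparatedFamily V 𝒰 M) : InjOn Prod.snd M := by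
  intro p hp q hq hpq
  by_contra hne
  rcases hM.2 hp hq hne with hdisj | hdisj
  · exact hdisj.notMem_of_mem_left (hpq ▸ (hM.1 hq).2) (hV q.1)
  · exact hdisj.notMem_of_mem_left (hpq ▸ (hM.1 hp).2) (hV p.1)

theorem SeparatedFamily.mk_le (hM : SeparatedFamily V 𝒰 M) (W : Set X) :
    #{p ∈ M | p.1 ∈ W} ≤ #{U ∈ 𝒰 | (U ∩ W).Nonempty} := by
  rw [← mk_image_eq_of_injOn _ _ ((hM.injOn_snd hV).mono (sep_subset _ _))]
  refine mk_le_mk_of_subset ?_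
  rintro _ ⟨p, ⟨hpM, hpW⟩, rfl⟩
  exact ⟨(hM.1 hpM).1, p.1, (hM.1 hpM).2, hpW⟩

theorem SeparatedFamily.discreteTopology [TopologicalSpace X] (hM : SeparatedFamily V 𝒰 M)
    (hVo : ∀ x, IsOpen (V x)) (h𝒰 : ∀ U ∈ 𝒰, IsOpen U) :
    DiscreteTopology (Prod.fst '' M) := by
  refine discreteTopology_subtype_iff'.2 ?_
  rintro _ ⟨p, hp, rfl⟩
  refine ⟨p.2 ∩ V p.1, (h𝒰 _ (hM.1 hp).1).inter (hVo _), ?_⟩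
  ext y
  constructor
  · rintro ⟨hy, q, hq, rfl⟩
    rw [hM.eq_of_mem_inter hV hp hq hy]
    rfl
  · rintro rfl
    exact ⟨⟨(hM.1 hp).2, hV _⟩, p, hp, rfl⟩

theorem Maximal.exists_inter_nonempty_of_separatedFamily
    (hM : Maximal (SeparatedFamily V 𝒰) M) {W : Set X} (hW : W ∈ 𝒰) (hne : W.Nonempty) :
    ∃ p ∈ M, (W ∩ V p.1).Nonempty := by
  by_contra! hdisj
  obtain ⟨w, hw⟩ := hne
  have hsep : ∀ p ∈ M, Disjoint W (V p.1) := fun p hp =>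
    disjoint_iff_inter_eq_empty.2 (hdisj p hp)
  have hins : SeparatedFamily V 𝒰 (insert (w, W) M) := by
    refine ⟨insert_subset ⟨hW, hw⟩ hM.prop.1, hM.prop.2.insert fun p hp _ => ?_⟩
    exact ⟨Or.inl (hsep p hp), Or.inr (hsep p hp)⟩
  exact (hsep _ (hM.mem_of_prop_insert hins)).notMem_of_mem_left hw (hV w)

theorem Maximal.mk_le_of_separatedFamily (hM : Maximal (SeparatedFamily V 𝒰) M)
    (hreg : (#𝒰).IsRegular) (hne : ∀ U ∈ 𝒰, U.Nonempty)
    (hsmall : ∀ x, #{U ∈ 𝒰 | (U ∩ V x).Nonempty} < #𝒰) : #𝒰 ≤ #M := by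
  by_contra! hlt
  have hcover : 𝒰 ⊆ ⋃ p : M, {U ∈ 𝒰 | (U ∩ V p.1.1).Nonempty} := fun W hW => by
    obtain ⟨p, hp, hWp⟩ := hM.exists_inter_nonempty_of_separatedFamily hV hW (hne W hW)
    exact mem_iUnion.2 ⟨⟨p, hp⟩, hW, hWp⟩
  obtain ⟨p, hp⟩ := exists_le_mk_of_subset_iUnion hreg hcover hlt le_rfl
  exact hp.not_gt (hsmall _)

end SeparatedFamily

/-- Every almost discretely Lindelöf space is weakly linearly Lindelöf. -/
theorem almostDiscretelyLindelof_weaklyLinearlyLindelof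
    (X : Type u) [TopologicalSpace X] (h : AlmostDiscretelyLindelof X) :
    WeaklyLinearlyLindelof X := by
  intro 𝒰 h𝒰 hreg hκ
  by_contra! hnone
  choose V hVo hxV hsmall using fun x => exists_isOpen_mk_lt_of_not_isCompleteAccPt (hnone x)
  obtain ⟨M, hM⟩ := exists_maximal_separatedFamily V 𝒰
  have hbig := hM.mk_le_of_separatedFamily hxV hreg (fun U hU => (h𝒰 U hU).2) hsmall
  obtain ⟨L, hML, hL⟩ :=
    h _ (hM.prop.discreteTopology hxV hVo fun U hU => (h𝒰 U hU).1)
  obtain ⟨r, hr, hLr⟩ := hL.elim_countable_subcover V hVo fun x _ => mem_iUnion.2 ⟨x, hxV x⟩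
  have hcover : M ⊆ ⋃ x : r, {p ∈ M | p.1 ∈ V x} := fun p hp => by
    obtain ⟨x, hx, hpx⟩ := mem_iUnion₂.1 (hLr (hML (mem_image_of_mem _ hp)))
    exact mem_iUnion.2 ⟨⟨x, hx⟩, hp, hpx⟩
  have hr_lt : #r < #𝒰 := (mk_le_aleph0_iff.2 hr.to_subtype).trans_lt hκ
  obtain ⟨x, hx⟩ := exists_le_mk_of_subset_iUnion hreg hcover hr_lt hbig
  exact (hx.trans (hM.prop.mk_le hxV _)).not_gt (hsmall x)
end

section
/- Every weakly Lindelöf topological space is weakly linearly Lindelöf. -/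
open Set Topology Cardinal

universe u

/-- A space is weakly Lindelöf if every open cover has a countable subfamily
whose union is dense. -/
def WeaklyLindelof (X : Type u) [TopologicalSpace X] : Prop :=
  ∀ 𝒰 : Set (Set X), (∀ U ∈ 𝒰, IsOpen U) → ⋃₀ 𝒰 = Set.univ →
    ∃ 𝒱 ⊆ 𝒰, 𝒱.Countable ∧ Dense (⋃₀ 𝒱)

/-- Every weakly Lindelöf space is weakly linearly Lindelöf. -/
theorem weaklyLindelof_weaklyLinearlyLindelof
    (X : Type u) [TopologicalSpace X] (h : WeaklyLindelof X) :
    WeaklyLinearlyLindelof X := by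
  intro 𝒰 h𝒰 hreg hℵ₀
  by_contra hno
  push_neg at hno
  simp only [IsCompleteAccPt] at hno
  push_neg at hno
  -- The family of "small" neighborhoods covers X
  set 𝒲 : Set (Set X) := {V | IsOpen V ∧ #↥{U ∈ 𝒰 | (U ∩ V).Nonempty} < #↥𝒰} with h𝒲
  have hcov : ⋃₀ 𝒲 = Set.univ := by
    apply eq_univ_of_forall
    intro x
    obtain ⟨V, hVo, hxV, hne⟩ := hno x
    refine ⟨V, ⟨hVo, lt_of_le_of_ne ?_ hne⟩, hxV⟩
    exact Cardinal.mk_le_mk_of_subset (sep_subset _ _)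
  obtain ⟨𝒱, h𝒱𝒲, h𝒱c, h𝒱d⟩ := h 𝒲 (fun V hV => hV.1) hcov
  -- Every member of 𝒰 meets some member of 𝒱
  have hsub : 𝒰 ⊆ ⋃ V ∈ 𝒱, {U ∈ 𝒰 | (U ∩ V).Nonempty} := by
    intro U hU
    obtain ⟨hUo, hUne⟩ := h𝒰 U hU
    obtain ⟨y, hyU, hyV⟩ := h𝒱d.inter_open_nonempty U hUo hUne
    obtain ⟨V, hV𝒱, hyV⟩ := hyV
    exact mem_biUnion hV𝒱 ⟨hU, y, hyU, hyV⟩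
  have h𝒱lt : #↥𝒱 < #↥𝒰 := lt_of_le_of_lt h𝒱c.le_aleph0 hℵ₀
  have : #↥𝒰 < #↥𝒰 := by
    calc #↥𝒰 ≤ #↥(⋃ V ∈ 𝒱, {U ∈ 𝒰 | (U ∩ V).Nonempty}) :=
          Cardinal.mk_le_mk_of_subset hsub
      _ < #↥𝒰 := by
          rw [Cardinal.card_biUnion_lt_iff_forall_of_isRegular hreg h𝒱lt]
          exact fun V hV => (h𝒱𝒲 hV).2
  exact absurd this (lt_irrefl _)
end

section
/- Let X be a topological space, κ an infinite regular cardinal, and 𝒰 a family of nonempty open subsets of X with |𝒰| = κ that has no complete accumulation point. Then there exists a pairwise disjoint family 𝒱 of nonempty open subsets of X with |𝒱| = κ that also has no complete accumulation point. -/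
open Set Topology Cardinal

universe u

/-- If a family of nonempty open sets of infinite regular cardinality `κ` has no
complete accumulation point, then there is a pairwise disjoint family of nonempty
open sets of cardinality `κ` with no complete accumulation point. -/
theorem exists_disjoint_family_no_completeAccPt
    {X : Type u} [TopologicalSpace X] (κ : Cardinal.{u}) (hκ : κ.IsRegular)
    (𝒰 : Set (Set X)) (hU : ∀ U ∈ 𝒰, IsOpen U ∧ U.Nonempty) (hcard : #↥𝒰 = κ)
    (hno : ∀ x : X, ¬ IsCompleteAccPt 𝒰 x) :
    ∃ 𝒱 : Set (Set X), (∀ V ∈ 𝒱, IsOpen V ∧ V.Nonempty) ∧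
      𝒱.PairwiseDisjoint id ∧ #↥𝒱 = κ ∧ ∀ x : X, ¬ IsCompleteAccPt 𝒱 x := by
  classical
  -- choose small neighborhoods
  have hO : ∀ x : X, ∃ o : Set X, IsOpen o ∧ x ∈ o ∧ #↥{U ∈ 𝒰 | (U ∩ o).Nonempty} < κ := by
    intro x
    have h := hno x
    rw [IsCompleteAccPt] at h
    push_neg at h
    obtain ⟨V, hV, hxV, hne⟩ := h
    refine ⟨V, hV, hxV, lt_of_le_of_ne ?_ ?_⟩
    · rw [← hcard]; exact Cardinal.mk_le_mk_of_subset (sep_subset _ _)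
    · rw [← hcard]; exact hne
  choose O hOopen hOmem hOsmall using hO
  have hpt : ∀ U : ↥𝒰, ∃ x, x ∈ (U : Set X) := fun U => (hU U.1 U.2).2
  choose pt hptmem using hpt
  set ι := κ.ord.ToType with hι
  have hmkι : #ι = κ := Cardinal.mk_ord_toType κ
  -- key existence for the recursion
  have key : ∀ (α : ι) (prev : ∀ β, β < α → ↥𝒰),
      ∃ U : ↥𝒰, ∀ β (h : β < α), ¬ ((U : Set X) ∩ O (pt (prev β h))).Nonempty := by
    intro α prev
    set S : Set (Set X) := ⋃ β : Iio α, {W ∈ 𝒰 | (W ∩ O (pt (prev β.1 β.2))).Nonempty} with hS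
    have hScard : #↥S < κ := by
      refine lt_of_le_of_lt (Cardinal.mk_iUnion_le _) ?_
      apply Cardinal.mul_lt_of_lt hκ.aleph0_le (Cardinal.mk_Iio_ord_toType α)
      exact Cardinal.iSup_lt_of_isRegular hκ (Cardinal.mk_Iio_ord_toType α)
        (fun β => hOsmall _)
    have hdiff : (𝒰 \ S).Nonempty := by
      rw [Set.nonempty_iff_ne_empty]
      intro hemp
      have hsub : 𝒰 ⊆ S := by
        intro W hW
        by_contra hWS
        exact (Set.eq_empty_iff_forall_notMem.mp hemp W) ⟨hW, hWS⟩
      exact absurd (hcard ▸ Cardinal.mk_le_mk_of_subset hsub) (not_le.mpr hScard)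
    obtain ⟨W, hW𝒰, hWS⟩ := hdiff
    refine ⟨⟨W, hW𝒰⟩, fun β h hne => hWS ?_⟩
    exact Set.mem_iUnion.mpr ⟨⟨β, h⟩, hW𝒰, hne⟩
  have wf : WellFounded ((· < ·) : ι → ι → Prop) := IsWellFounded.wf
  set U : ι → ↥𝒰 := wf.fix (fun α ih => (key α ih).choose) with hUdef
  have hUgood : ∀ α β : ι, β < α → ¬ ((U α : Set X) ∩ O (pt (U β))).Nonempty := by
    intro α β h
    have heq : U α = (key α (fun β _ => U β)).choose := by
      rw [hUdef]; exact wf.fix_eq _ α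
    rw [heq]
    exact (key α (fun β _ => U β)).choose_spec β h
  set V : ι → Set X := fun α => (U α : Set X) ∩ O (pt (U α)) with hVdef
  have hVopen : ∀ α, IsOpen (V α) := fun α =>
    ((hU _ (U α).2).1).inter (hOopen _)
  have hVmem : ∀ α, pt (U α) ∈ V α := fun α => ⟨hptmem _, hOmem _⟩
  have hVsub : ∀ α, V α ⊆ (U α : Set X) := fun α => Set.inter_subset_left
  have hdisj : ∀ α β : ι, α ≠ β → Disjoint (V α) (V β) := by
    have main : ∀ α β : ι, β < α → Disjoint (V β) (V α) := by
      intro α β h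
      have hd : Disjoint (U α : Set X) (O (pt (U β))) := by
        rw [Set.disjoint_iff_inter_eq_empty, ← Set.not_nonempty_iff_eq_empty]
        exact hUgood α β h
      exact hd.symm.mono Set.inter_subset_right (hVsub α)
    intro α β hne
    rcases lt_or_gt_of_ne hne with h | h
    · exact main β α h
    · exact (main α β h).symm
  have hVinj : Function.Injective V := by
    intro α β hVeq
    by_contra hne
    have := (hdisj α β hne)
    rw [hVeq, disjoint_self] at this
    exact absurd (hVmem β) (by rw [this]; exact notMem_empty _)
  have hUinj : Function.Injective U := by
    intro α β hUeq
    by_contra hne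
    rcases lt_or_gt_of_ne hne with h | h
    · exact hUgood β α h ⟨pt (U α), (hUeq ▸ hptmem (U α) : pt (U α) ∈ (U β : Set X)), hOmem _⟩
    · exact hUgood α β h ⟨pt (U β), (hUeq ▸ hptmem (U β) : pt (U β) ∈ (U α : Set X)), hOmem _⟩
  refine ⟨Set.range V, ?_, ?_, ?_, ?_⟩
  · rintro _ ⟨α, rfl⟩
    exact ⟨hVopen α, ⟨pt (U α), hVmem α⟩⟩
  · rintro _ ⟨α, rfl⟩ _ ⟨β, rfl⟩ hne
    exact hdisj α β (fun h => hne (by rw [h]))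
  · rw [Cardinal.mk_range_eq _ hVinj, hmkι]
  · intro x hx
    have hbig := hx (O x) (hOopen x) (hOmem x)
    rw [Cardinal.mk_range_eq _ hVinj, hmkι] at hbig
    -- build an injection from the accumulated V's into the accumulated U's
    set A := {W ∈ Set.range V | (W ∩ O x).Nonempty} with hA
    set B := {W ∈ 𝒰 | (W ∩ O x).Nonempty} with hB
    have hidx : ∀ a : ↥A, ∃ α : ι, V α = (a : Set X) := fun a => a.2.1
    choose idx hidx_eq using hidx
    have hf : ∀ a : ↥A, (U (idx a) : Set X) ∈ B := by
      intro a
      refine ⟨(U (idx a)).2, ?_⟩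
      obtain ⟨y, hy⟩ := a.2.2
      rw [← hidx_eq a] at hy
      exact ⟨y, hVsub _ hy.1, hy.2⟩
    have hinj : Function.Injective (fun a : ↥A => (⟨_, hf a⟩ : ↥B)) := by
      intro a b hab
      have : (U (idx a) : Set X) = (U (idx b) : Set X) := congrArg (fun z : ↥B => (z : Set X)) hab
      have h2 : idx a = idx b := hUinj (Subtype.ext this)
      have := hidx_eq a
      rw [h2, hidx_eq b] at this
      exact Subtype.ext this.symm
    have hle : #↥A ≤ #↥B := Cardinal.mk_le_of_injective hinj
    rw [hbig] at hle
    exact absurd hle (not_le.mpr (hOsmall x))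
end

section
/- Every weakly Lindelöf GO space is Lindelöf. That is, if X is a topological space that embeds homeomorphically into a linearly ordered set L equipped with its order topology, and X is weakly Lindelöf, then X is Lindelöf. -/
open Set Topology Cardinal

universe u

/-- Auxiliary lemma: a topological space carrying a linear order such that open rays
are open and every open set has a basis of order-convex open sets is Lindelöf
whenever it is weakly Lindelöf. -/
theorem aux_weaklyLindelof_isLindelof {X : Type u} [TopologicalSpace X] [LinearOrder X]
    (hIio : ∀ b : X, IsOpen (Iio b)) (hIoi : ∀ b : X, IsOpen (Ioi b))
    (hbasis : ∀ O : Set X, IsOpen O → ∀ x ∈ O, ∃ V : Set X, IsOpen V ∧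
      (∀ p ∈ V, ∀ q ∈ V, Icc p q ⊆ V) ∧ x ∈ V ∧ V ⊆ O)
    (h : WeaklyLindelof X) : LindelofSpace X := by
  refine ⟨?_⟩
  apply isLindelof_of_countable_subcover
  intro ι U hUo hsU
  rcases isEmpty_or_nonempty X with hX | hX
  · exact ⟨∅, countable_empty, fun z _ => (IsEmpty.false z).elim⟩
  have hι : Nonempty ι := by
    obtain ⟨x⟩ := hX
    obtain ⟨i, -⟩ := mem_iUnion.mp (hsU (mem_univ x))
    exact ⟨i⟩
  -- the family of open convex sets refining the cover
  set 𝒞 : Set (Set X) := {V | IsOpen V ∧ (∀ p ∈ V, ∀ q ∈ V, Icc p q ⊆ V) ∧ ∃ i, V ⊆ U i}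
    with h𝒞
  have hCopen : ∀ C ∈ 𝒞, IsOpen C := fun C hC => hC.1
  have hCconv : ∀ C ∈ 𝒞, ∀ p ∈ C, ∀ q ∈ C, Icc p q ⊆ C := fun C hC => hC.2.1
  have hCmem : ∀ x : X, ∃ C ∈ 𝒞, x ∈ C := by
    intro x
    obtain ⟨i, hi⟩ := mem_iUnion.mp (hsU (mem_univ x))
    obtain ⟨V, hVo, hVc, hxV, hVU⟩ := hbasis (U i) (hUo i) x hi
    exact ⟨V, ⟨hVo, hVc, i, hVU⟩, hxV⟩
  have hCicc : ∀ C ∈ 𝒞, ∀ a ∈ C, ∀ b ∈ C, Icc (min a b) (max a b) ⊆ C := by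
    intro C hC a ha b hb
    rcases le_total a b with hab | hba
    · rw [min_eq_left hab, max_eq_right hab]; exact hCconv C hC a ha b hb
    · rw [min_eq_right hba, max_eq_left hba]; exact hCconv C hC b hb a ha
  -- the relation: the interval between the two points is countably coverable
  set Rel : X → X → Prop :=
    fun a b => ∃ D : Set (Set X), D ⊆ 𝒞 ∧ D.Countable ∧ Icc (min a b) (max a b) ⊆ ⋃₀ D
    with hRelDef
  have hrefl : ∀ x, Rel x x := by
    intro x
    obtain ⟨C, hC, hxC⟩ := hCmem x
    refine ⟨{C}, singleton_subset_iff.mpr hC, countable_singleton C, ?_⟩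
    rw [sUnion_singleton, min_self, max_self, Icc_self]
    exact singleton_subset_iff.mpr hxC
  have hsymm : ∀ x y, Rel x y → Rel y x := by
    rintro x y ⟨D, h1, h2, h3⟩
    exact ⟨D, h1, h2, by rwa [min_comm, max_comm]⟩
  have hicc_split : ∀ x y z : X,
      Icc (min x z) (max x z) ⊆ Icc (min x y) (max x y) ∪ Icc (min y z) (max y z) := by
    rintro x y z r ⟨h1, h2⟩
    rcases le_total r y with hry | hyr
    · rcases min_le_iff.mp h1 with hx | hz
      · exact Or.inl ⟨min_le_iff.mpr (Or.inl hx), le_max_iff.mpr (Or.inr hry)⟩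
      · exact Or.inr ⟨min_le_iff.mpr (Or.inr hz), le_max_iff.mpr (Or.inl hry)⟩
    · rcases le_max_iff.mp h2 with hx | hz
      · exact Or.inl ⟨min_le_iff.mpr (Or.inr hyr), le_max_iff.mpr (Or.inl hx)⟩
      · exact Or.inr ⟨min_le_iff.mpr (Or.inl hyr), le_max_iff.mpr (Or.inr hz)⟩
  have htrans : ∀ x y z, Rel x y → Rel y z → Rel x z := by
    rintro x y z ⟨D1, hD1, hc1, hi1⟩ ⟨D2, hD2, hc2, hi2⟩
    refine ⟨D1 ∪ D2, union_subset hD1 hD2, hc1.union hc2, ?_⟩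
    rw [sUnion_union]
    exact (hicc_split x y z).trans (union_subset_union hi1 hi2)
  -- the classes
  set E : X → Set X := fun x => {y | Rel x y} with hE
  have hmemE : ∀ x, x ∈ E x := fun x => hrefl x
  have hCrel : ∀ C ∈ 𝒞, ∀ p ∈ C, ∀ w ∈ C, Rel p w := by
    intro C hC p hp w hw
    exact ⟨{C}, singleton_subset_iff.mpr hC, countable_singleton C, by
      rw [sUnion_singleton]; exact hCicc C hC p hp w hw⟩
  have hCsubE : ∀ x, ∀ C ∈ 𝒞, ∀ p ∈ C, Rel x p → C ⊆ E x := by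
    intro x C hC p hp hxp w hw
    exact htrans x p w hxp (hCrel C hC p hp w hw)
  have hEopen : ∀ x, IsOpen (E x) := by
    intro x
    rw [isOpen_iff_forall_mem_open]
    intro p hp
    obtain ⟨C, hC, hpC⟩ := hCmem p
    exact ⟨C, hCsubE x C hC p hpC hp, hCopen C hC, hpC⟩
  have hEeq : ∀ x y, Rel x y → E x = E y := by
    intro x y hxy
    ext z
    exact ⟨fun hz => htrans y x z (hsymm x y hxy) hz, fun hz => htrans x y z hxy hz⟩
  -- every class has a countable cofinal subset
  have hcof : ∀ x, ∃ S, S ⊆ E x ∧ S.Countable ∧ ∀ p ∈ E x, ∃ s ∈ S, p ≤ s := by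
    intro x
    by_contra hcon
    push_neg at hcon
    have hcon' : ∀ S, S ⊆ E x → S.Countable → ∃ p ∈ E x, ∀ s ∈ S, s < p := by
      intro S h1 h2
      obtain ⟨p, hp1, hp2⟩ := hcon S h1 h2
      exact ⟨p, hp1, hp2⟩
    set T : Set X := {z | ∀ p ∈ E x, p ≤ z} with hT
    have hTnE : ∀ z ∈ T, z ∉ E x := by
      intro z hz hzE
      obtain ⟨p, hpE, hps⟩ := hcon' {z} (singleton_subset_iff.mpr hzE) (countable_singleton z)
      exact absurd (hz p hpE) (not_le.mpr (hps z (mem_singleton z)))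
    have hTopen : IsOpen T := by
      rw [isOpen_iff_forall_mem_open]
      intro z hz
      obtain ⟨C, hC, hzC⟩ := hCmem z
      refine ⟨C, ?_, hCopen C hC, hzC⟩
      by_cases hCE : (C ∩ E x).Nonempty
      · obtain ⟨p, hpC, hpE⟩ := hCE
        exact absurd (htrans x p z hpE (hCrel C hC p hpC z hzC)) (hTnE z hz)
      · intro w hw p hpE
        by_contra hpw
        push_neg at hpw
        have hpz : p ≤ z := hz p hpE
        exact hCE ⟨p, hCconv C hC w hw z hzC ⟨le_of_lt hpw, hpz⟩, hpE⟩
    set 𝒲 : Set (Set X) := insert T ((fun y => Iio y) '' E x) with h𝒲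
    have h𝒲open : ∀ W ∈ 𝒲, IsOpen W := by
      rintro W (rfl | ⟨y, -, rfl⟩)
      · exact hTopen
      · exact hIio y
    have h𝒲cov : ⋃₀ 𝒲 = Set.univ := by
      apply eq_univ_of_forall
      intro z
      by_cases hz : ∃ p ∈ E x, z < p
      · obtain ⟨p, hpE, hzp⟩ := hz
        exact ⟨Iio p, mem_insert_of_mem _ ⟨p, hpE, rfl⟩, hzp⟩
      · push_neg at hz
        exact ⟨T, mem_insert _ _, fun p hp => hz p hp⟩
    obtain ⟨𝒱, h𝒱sub, h𝒱c, h𝒱d⟩ := h 𝒲 h𝒲open h𝒲cov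
    have hgex : ∀ v : Set X, ∃ y : X, v ∈ 𝒱 → v ≠ T → y ∈ E x ∧ v = Iio y := by
      intro v
      by_cases hv : v ∈ 𝒱 ∧ v ≠ T
      · rcases h𝒱sub hv.1 with rfl | ⟨y, hy, rfl⟩
        · exact absurd rfl hv.2
        · exact ⟨y, fun _ _ => ⟨hy, rfl⟩⟩
      · exact ⟨x, fun h1 h2 => absurd ⟨h1, h2⟩ hv⟩
    choose g hg using hgex
    set S : Set X := g '' (𝒱 \ {T}) with hS
    have hSsub : S ⊆ E x := by
      rintro s ⟨v, ⟨hv1, hv2⟩, rfl⟩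
      exact (hg v hv1 hv2).1
    have hSc : S.Countable := (h𝒱c.mono diff_subset).image g
    obtain ⟨b1, hb1E, hb1⟩ := hcon' S hSsub hSc
    obtain ⟨b2, hb2E, hb2⟩ := hcon' (insert b1 S) (insert_subset hb1E hSsub) (hSc.insert b1)
    obtain ⟨b3, hb3E, hb3⟩ := hcon' (insert b2 (insert b1 S))
      (insert_subset hb2E (insert_subset hb1E hSsub)) ((hSc.insert b1).insert b2)
    have h12 : b1 < b2 := hb2 b1 (mem_insert _ _)
    have h23 : b2 < b3 := hb3 b2 (mem_insert _ _)
    have hVo : IsOpen (Ioo b1 b3) := by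
      rw [← Ioi_inter_Iio]
      exact (hIoi b1).inter (hIio b3)
    obtain ⟨z, hz1, v, hv𝒱, hzv⟩ := h𝒱d.inter_open_nonempty (Ioo b1 b3) hVo ⟨b2, h12, h23⟩
    by_cases hvT : v = T
    · subst hvT
      exact absurd (hzv b3 hb3E) (not_le.mpr hz1.2)
    · have hgS : g v ∈ S := ⟨v, ⟨hv𝒱, hvT⟩, rfl⟩
      have hzg : z < g v := by
        have := (hg v hv𝒱 hvT).2
        rw [this] at hzv
        exact hzv
      exact absurd (hzg.trans (hb1 (g v) hgS)) (not_lt.mpr (le_of_lt hz1.1))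
  -- every class has a countable coinitial subset (mirror image of the above)
  have hcoi : ∀ x, ∃ S, S ⊆ E x ∧ S.Countable ∧ ∀ p ∈ E x, ∃ s ∈ S, s ≤ p := by
    intro x
    by_contra hcon
    push_neg at hcon
    have hcon' : ∀ S, S ⊆ E x → S.Countable → ∃ p ∈ E x, ∀ s ∈ S, p < s := by
      intro S h1 h2
      obtain ⟨p, hp1, hp2⟩ := hcon S h1 h2
      exact ⟨p, hp1, hp2⟩
    set T : Set X := {z | ∀ p ∈ E x, z ≤ p} with hT
    have hTnE : ∀ z ∈ T, z ∉ E x := by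
      intro z hz hzE
      obtain ⟨p, hpE, hps⟩ := hcon' {z} (singleton_subset_iff.mpr hzE) (countable_singleton z)
      exact absurd (hz p hpE) (not_le.mpr (hps z (mem_singleton z)))
    have hTopen : IsOpen T := by
      rw [isOpen_iff_forall_mem_open]
      intro z hz
      obtain ⟨C, hC, hzC⟩ := hCmem z
      refine ⟨C, ?_, hCopen C hC, hzC⟩
      by_cases hCE : (C ∩ E x).Nonempty
      · obtain ⟨p, hpC, hpE⟩ := hCE
        exact absurd (htrans x p z hpE (hCrel C hC p hpC z hzC)) (hTnE z hz)
      · intro w hw p hpE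
        by_contra hpw
        push_neg at hpw
        have hpz : z ≤ p := hz p hpE
        exact hCE ⟨p, hCconv C hC z hzC w hw ⟨hpz, le_of_lt hpw⟩, hpE⟩
    set 𝒲 : Set (Set X) := insert T ((fun y => Ioi y) '' E x) with h𝒲
    have h𝒲open : ∀ W ∈ 𝒲, IsOpen W := by
      rintro W (rfl | ⟨y, -, rfl⟩)
      · exact hTopen
      · exact hIoi y
    have h𝒲cov : ⋃₀ 𝒲 = Set.univ := by
      apply eq_univ_of_forall
      intro z
      by_cases hz : ∃ p ∈ E x, p < z
      · obtain ⟨p, hpE, hzp⟩ := hz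
        exact ⟨Ioi p, mem_insert_of_mem _ ⟨p, hpE, rfl⟩, hzp⟩
      · push_neg at hz
        exact ⟨T, mem_insert _ _, fun p hp => hz p hp⟩
    obtain ⟨𝒱, h𝒱sub, h𝒱c, h𝒱d⟩ := h 𝒲 h𝒲open h𝒲cov
    have hgex : ∀ v : Set X, ∃ y : X, v ∈ 𝒱 → v ≠ T → y ∈ E x ∧ v = Ioi y := by
      intro v
      by_cases hv : v ∈ 𝒱 ∧ v ≠ T
      · rcases h𝒱sub hv.1 with rfl | ⟨y, hy, rfl⟩
        · exact absurd rfl hv.2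
        · exact ⟨y, fun _ _ => ⟨hy, rfl⟩⟩
      · exact ⟨x, fun h1 h2 => absurd ⟨h1, h2⟩ hv⟩
    choose g hg using hgex
    set S : Set X := g '' (𝒱 \ {T}) with hS
    have hSsub : S ⊆ E x := by
      rintro s ⟨v, ⟨hv1, hv2⟩, rfl⟩
      exact (hg v hv1 hv2).1
    have hSc : S.Countable := (h𝒱c.mono diff_subset).image g
    obtain ⟨b1, hb1E, hb1⟩ := hcon' S hSsub hSc
    obtain ⟨b2, hb2E, hb2⟩ := hcon' (insert b1 S) (insert_subset hb1E hSsub) (hSc.insert b1)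
    obtain ⟨b3, hb3E, hb3⟩ := hcon' (insert b2 (insert b1 S))
      (insert_subset hb2E (insert_subset hb1E hSsub)) ((hSc.insert b1).insert b2)
    have h12 : b2 < b1 := hb2 b1 (mem_insert _ _)
    have h23 : b3 < b2 := hb3 b2 (mem_insert _ _)
    have hVo : IsOpen (Ioo b3 b1) := by
      rw [← Ioi_inter_Iio]
      exact (hIoi b3).inter (hIio b1)
    obtain ⟨z, hz1, v, hv𝒱, hzv⟩ := h𝒱d.inter_open_nonempty (Ioo b3 b1) hVo ⟨b2, h23, h12⟩
    by_cases hvT : v = T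
    · subst hvT
      exact absurd (hzv b3 hb3E) (not_le.mpr hz1.1)
    · have hgS : g v ∈ S := ⟨v, ⟨hv𝒱, hvT⟩, rfl⟩
      have hzg : g v < z := by
        have := (hg v hv𝒱 hvT).2
        rw [this] at hzv
        exact hzv
      exact absurd ((hb1 (g v) hgS).trans hzg) (not_lt.mpr (le_of_lt hz1.2))
  -- hence every class is covered by countably many members of 𝒞
  have hclasscov : ∀ x, ∃ D, D ⊆ 𝒞 ∧ D.Countable ∧ E x ⊆ ⋃₀ D := by
    intro x
    obtain ⟨Sp, hSpE, hSpc, hSpcof⟩ := hcof x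
    obtain ⟨Sm, hSmE, hSmc, hSmcoi⟩ := hcoi x
    have hpair : ∀ a b : X, ∃ D : Set (Set X),
        a ∈ Sm → b ∈ Sp → D ⊆ 𝒞 ∧ D.Countable ∧ Icc a b ⊆ ⋃₀ D := by
      intro a b
      by_cases hab : a ∈ Sm ∧ b ∈ Sp
      · obtain ⟨D, h1, h2, h3⟩ := htrans a x b (hsymm x a (hSmE hab.1)) (hSpE hab.2)
        exact ⟨D, fun _ _ =>
          ⟨h1, h2, (Icc_subset_Icc (min_le_left a b) (le_max_right a b)).trans h3⟩⟩
      · exact ⟨∅, fun h1 h2 => absurd ⟨h1, h2⟩ hab⟩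
    choose F hF using hpair
    refine ⟨⋃ a ∈ Sm, ⋃ b ∈ Sp, F a b, ?_, ?_, ?_⟩
    · exact iUnion₂_subset fun a ha => iUnion₂_subset fun b hb => (hF a b ha hb).1
    · exact hSmc.biUnion fun a ha => hSpc.biUnion fun b hb => (hF a b ha hb).2.1
    · intro p hp
      obtain ⟨b, hbSp, hpb⟩ := hSpcof p hp
      obtain ⟨a, haSm, hap⟩ := hSmcoi p hp
      obtain ⟨C, hCF, hpC⟩ := (hF a b haSm hbSp).2.2 ⟨hap, hpb⟩
      exact ⟨C, mem_iUnion₂.mpr ⟨a, haSm, mem_iUnion₂.mpr ⟨b, hbSp, hCF⟩⟩, hpC⟩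
  -- there are only countably many classes
  have hclopen : ∀ W ∈ {s : Set X | ∃ x, s = E x}, IsOpen W := by
    rintro W ⟨x, rfl⟩
    exact hEopen x
  have hclcov : ⋃₀ {s : Set X | ∃ x, s = E x} = Set.univ :=
    eq_univ_of_forall fun z => ⟨E z, ⟨z, rfl⟩, hmemE z⟩
  obtain ⟨𝒱, h𝒱sub, h𝒱c, h𝒱d⟩ := h _ hclopen hclcov
  have hallin : ∀ x, E x ∈ 𝒱 := by
    intro x
    obtain ⟨z, hzE, v, hv𝒱, hzv⟩ := h𝒱d.inter_open_nonempty (E x) (hEopen x) ⟨x, hmemE x⟩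
    obtain ⟨y, rfl⟩ := h𝒱sub hv𝒱
    rwa [hEeq x y (htrans x z y hzE (hsymm y z hzv))]
  -- collect the countable covers of the countably many classes
  have hGex : ∀ v : Set X, ∃ D : Set (Set X), v ∈ 𝒱 → D ⊆ 𝒞 ∧ D.Countable ∧ v ⊆ ⋃₀ D := by
    intro v
    by_cases hv : v ∈ 𝒱
    · obtain ⟨y, rfl⟩ := h𝒱sub hv
      obtain ⟨D, h1, h2, h3⟩ := hclasscov y
      exact ⟨D, fun _ => ⟨h1, h2, h3⟩⟩
    · exact ⟨∅, fun h1 => absurd h1 hv⟩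
  choose G hG using hGex
  have h𝒟sub : (⋃ v ∈ 𝒱, G v) ⊆ 𝒞 := iUnion₂_subset fun v hv => (hG v hv).1
  have h𝒟c : (⋃ v ∈ 𝒱, G v).Countable := h𝒱c.biUnion fun v hv => (hG v hv).2.1
  have h𝒟cov : ∀ z : X, ∃ C ∈ ⋃ v ∈ 𝒱, G v, z ∈ C := by
    intro z
    obtain ⟨C, hC, hzC⟩ := (hG (E z) (hallin z)).2.2 (hmemE z)
    exact ⟨C, mem_iUnion₂.mpr ⟨E z, hallin z, hC⟩, hzC⟩
  -- extract indices
  have hIex : ∀ C : Set X, ∃ i : ι, C ∈ (⋃ v ∈ 𝒱, G v) → C ⊆ U i := by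
    intro C
    by_cases hC : C ∈ ⋃ v ∈ 𝒱, G v
    · obtain ⟨i, hi⟩ := (h𝒟sub hC).2.2
      exact ⟨i, fun _ => hi⟩
    · exact ⟨Classical.arbitrary ι, fun h1 => absurd h1 hC⟩
  choose I hI using hIex
  refine ⟨I '' (⋃ v ∈ 𝒱, G v), h𝒟c.image I, ?_⟩
  intro z _
  obtain ⟨C, hC𝒟, hzC⟩ := h𝒟cov z
  exact mem_biUnion ⟨C, hC𝒟, rfl⟩ (hI C hC𝒟 hzC)

/-- Every weakly Lindelöf GO space (a space embedding into a linear order with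
its order topology) is Lindelöf. -/
theorem weaklyLindelof_GO_isLindelof
    (X : Type u) [TopologicalSpace X] (L : Type u) [LinearOrder L]
    [TopologicalSpace L] [OrderTopology L] (e : X → L) (he : IsEmbedding e)
    (h : WeaklyLindelof X) : LindelofSpace X := by
  letI : LinearOrder X := LinearOrder.lift' e he.injective
  have hle : ∀ a b : X, a ≤ b ↔ e a ≤ e b := fun _ _ => Iff.rfl
  have hlt : ∀ a b : X, a < b ↔ e a < e b := fun _ _ => Iff.rfl
  have hLbasic : ∀ (W : Set L), IsOpen W → ∀ l ∈ W,
      ∃ V, IsOpen V ∧ V.OrdConnected ∧ l ∈ V ∧ V ⊆ W := by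
    intro W hW
    rw [isOpen_iff_generate_intervals] at hW
    induction hW with
    | basic s hs =>
      intro l hl
      obtain ⟨a, rfl | rfl⟩ := hs
      · exact ⟨Ioi a, isOpen_Ioi, ordConnected_Ioi, hl, subset_rfl⟩
      · exact ⟨Iio a, isOpen_Iio, ordConnected_Iio, hl, subset_rfl⟩
    | univ => exact fun l _ => ⟨univ, isOpen_univ, ordConnected_univ, trivial, subset_rfl⟩
    | inter s t _ _ ihs iht =>
      intro l hl
      obtain ⟨V1, h1, c1, m1, s1⟩ := ihs l hl.1
      obtain ⟨V2, h2, c2, m2, s2⟩ := iht l hl.2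
      exact ⟨V1 ∩ V2, h1.inter h2, c1.inter c2, ⟨m1, m2⟩, inter_subset_inter s1 s2⟩
    | sUnion S _ ih =>
      intro l hl
      obtain ⟨s, hsS, hls⟩ := hl
      obtain ⟨V, h1, c1, m1, s1⟩ := ih s hsS l hls
      exact ⟨V, h1, c1, m1, s1.trans (subset_sUnion_of_mem hsS)⟩
  apply aux_weaklyLindelof_isLindelof ?_ ?_ ?_ h
  · intro b
    have hb : Iio b = e ⁻¹' (Iio (e b)) := by
      ext z
      simp only [mem_Iio, mem_preimage]
      exact hlt z b
    rw [hb]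
    exact isOpen_Iio.preimage he.continuous
  · intro b
    have hb : Ioi b = e ⁻¹' (Ioi (e b)) := by
      ext z
      simp only [mem_Ioi, mem_preimage]
      exact hlt b z
    rw [hb]
    exact isOpen_Ioi.preimage he.continuous
  · intro O hO x hxO
    obtain ⟨W, hW, rfl⟩ := he.isInducing.isOpen_iff.mp hO
    obtain ⟨V', hV'o, hV'c, hmem, hsub⟩ := hLbasic W hW (e x) hxO
    refine ⟨e ⁻¹' V', hV'o.preimage he.continuous, ?_, hmem, preimage_mono hsub⟩
    rintro p hp q hq r ⟨h1, h2⟩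
    exact hV'c.out hp hq ⟨(hle p r).mp h1, (hle r q).mp h2⟩
end

section
/- If a GO space X has a dense subspace Y that is linearly Lindelöf (in the subspace topology), then X is Lindelöf. That is, if X is a topological space that embeds homeomorphically into a linearly ordered set L equipped with its order topology, and X has a dense linearly Lindelöf subspace, then X is Lindelöf. -/
/-!
Order `X` through the embedding; its topology is then finer than the order topology and has a base
of order-connected sets. Fix an open cover `U` and call `x`, `y` equivalent when `[[x, y]]` is
covered by countably many members of `U`. Convex neighbourhoods make the classes open, hence clopen.
A dense linearly Lindelöf subspace `Y` controls increasing open covers: if `W` is one and the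
nonempty open sets `O i` avoid `W j` for `j < i`, then `O i` meets `Y`, which lies in countably
many `W j`, so countably many indices are cofinal. With `W d = Iio d ∪ Eᶜ` this gives every class
`E` a countable cofinal (and, dually, coinitial) subset, so `E` is countably covered; indexing an
uncountable open partition by `ω₁` would make `ω₁` a countable union of countable initial
segments, so there are only countably many classes.
-/

open Set Topology Cardinal

universe u

def LinearlyLindelof (X : Type u) [TopologicalSpace X] : Prop :=
  ∀ 𝒰 : Set (Set X), (∀ U ∈ 𝒰, IsOpen U) → ⋃₀ 𝒰 = Set.univ →
    IsChain (· ⊆ ·) 𝒰 → ∃ 𝒱 ⊆ 𝒰, 𝒱.Countable ∧ ⋃₀ 𝒱 = Set.univ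

section LinearlyLindelof

variable {X : Type u} [TopologicalSpace X]

theorem LinearlyLindelof.exists_countable_iUnion_eq_univ (hX : LinearlyLindelof X)
    {ι : Type*} [LinearOrder ι] {W : ι → Set X} (hW : Monotone W) (hWo : ∀ i, IsOpen (W i))
    (hWc : ⋃ i, W i = Set.univ) : ∃ s : Set ι, s.Countable ∧ ⋃ i ∈ s, W i = Set.univ := by
  obtain ⟨𝒱, h𝒱W, h𝒱c, h𝒱⟩ :=
    hX (range W) (forall_mem_range.2 hWo) (sUnion_range W ▸ hWc) hW.isChain_range
  choose g hg using fun V : 𝒱 => h𝒱W V.2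
  have := h𝒱c.to_subtype
  refine ⟨range g, countable_range g, eq_univ_of_forall fun x => ?_⟩
  obtain ⟨V, hV, hxV⟩ := mem_sUnion.1 (h𝒱 ▸ mem_univ x)
  exact mem_biUnion (mem_range_self ⟨V, hV⟩) ((hg ⟨V, hV⟩).symm ▸ hxV)

variable {Y : Set X}

theorem Dense.exists_countable_isCofinal (hd : Dense Y) (hY : LinearlyLindelof Y)
    {ι : Type*} [LinearOrder ι] {W O : ι → Set X} (hW : Monotone W) (hWo : ∀ i, IsOpen (W i))
    (hWc : ⋃ i, W i = Set.univ) (hOo : ∀ i, IsOpen (O i)) (hOne : ∀ i, (O i).Nonempty)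
    (hOW : ∀ i j, j < i → Disjoint (O i) (W j)) :
    ∃ s : Set ι, s.Countable ∧ IsCofinal s := by
  obtain ⟨s, hsc, hs⟩ := hY.exists_countable_iUnion_eq_univ (W := fun i => (↑) ⁻¹' W i)
    (fun i j hij => preimage_mono (hW hij)) (fun i => (hWo i).preimage continuous_subtype_val)
    (by rw [← preimage_iUnion, hWc, preimage_univ])
  refine ⟨s, hsc, fun i => ?_⟩
  obtain ⟨y, hyO, hyY⟩ := hd.inter_open_nonempty _ (hOo i) (hOne i)
  obtain ⟨j, hj, hyj⟩ := mem_iUnion₂.1 (hs ▸ mem_univ (⟨y, hyY⟩ : Y))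
  exact ⟨j, hj, not_lt.1 fun hji => (hOW i j hji).ne_of_mem hyO hyj rfl⟩

theorem Dense.countable_of_injective_pairwiseDisjoint (hd : Dense Y) (hY : LinearlyLindelof Y)
    {Q : Set (Set X)} (hQo : ∀ q ∈ Q, IsOpen q) (hQne : ∀ q ∈ Q, q.Nonempty)
    (hQd : Q.PairwiseDisjoint id) (hQc : ⋃₀ Q = Set.univ) {ι : Type*} [LinearOrder ι]
    (hIic : ∀ i : ι, (Iic i).Countable) {g : ι → Q} (hg : g.Injective) : Countable ι := by
  rcases isEmpty_or_nonempty ι with _ | _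
  · infer_instance
  set f := Function.invFun g
  have hfg : ∀ i, f (g i) = i := Function.leftInverse_invFun hg
  obtain ⟨s, hsc, hs⟩ := hd.exists_countable_isCofinal hY
    (W := fun i => ⋃ (q : Q) (_ : f q ≤ i), (q : Set X)) (O := fun i => (g i : Set X))
    (fun i j hij => iUnion₂_mono' fun q hq => ⟨q, hq.trans hij, subset_rfl⟩)
    (fun i => isOpen_iUnion fun q => isOpen_iUnion fun _ => hQo q q.2)
    (eq_univ_of_forall fun x => by
      obtain ⟨q, hq, hxq⟩ := mem_sUnion.1 (hQc ▸ mem_univ x)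
      exact mem_iUnion.2 ⟨f ⟨q, hq⟩, mem_iUnion₂.2 ⟨⟨q, hq⟩, le_rfl, hxq⟩⟩)
    (fun i => hQo _ (g i).2) (fun i => hQne _ (g i).2)
    (fun i j hji => by
      refine disjoint_iUnion_right.2 fun q => disjoint_iUnion_right.2 fun hqj =>
        hQd (g i).2 q.2 fun h => ?_
      have : g i = q := Subtype.ext h
      exact (hqj.trans_lt hji).ne (this ▸ hfg i))
  refine countable_univ_iff.1 <| (hsc.biUnion fun i _ => hIic i).mono fun i _ => ?_
  obtain ⟨j, hj, hij⟩ := hs i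
  exact mem_biUnion hj hij

theorem Dense.countable_of_pairwiseDisjoint (hd : Dense Y) (hY : LinearlyLindelof Y)
    {Q : Set (Set X)} (hQo : ∀ q ∈ Q, IsOpen q) (hQne : ∀ q ∈ Q, q.Nonempty)
    (hQd : Q.PairwiseDisjoint id) (hQc : ⋃₀ Q = Set.univ) : Q.Countable := by
  by_contra hQ
  let ι := (ℵ₁ : Cardinal.{u}).ord.ToType
  have hι : #ι = ℵ₁ := mk_ord_toType _
  have hIic : ∀ i : ι, (Iic i).Countable := fun i => by
    rw [← Iio_insert, countable_insert, ← le_aleph0_iff_set_countable, ← lt_aleph_one_iff]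
    exact (mk_Iio_lt i (by rw [hι, Ordinal.type_toType])).trans_eq hι
  obtain ⟨g⟩ : Nonempty (ι ↪ Q) := by
    rw [← le_def, hι, aleph_one_le_iff, aleph0_lt_mk_iff]
    exact not_countable_iff.1 hQ
  have := hd.countable_of_injective_pairwiseDisjoint hY hQo hQne hQd hQc hIic g.injective
  rw [← mk_le_aleph0_iff, hι] at this
  exact aleph0_lt_aleph_one.not_ge this

theorem IsClopen.exists_countable_forall_le [LinearOrder X] [OrderClosedTopology X]
    (hd : Dense Y) (hY : LinearlyLindelof Y) {E : Set X} (hE : IsClopen E) :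
    ∃ T ⊆ E, T.Countable ∧ ∀ z ∈ E, ∃ t ∈ T, z ≤ t := by
  rcases E.eq_empty_or_nonempty with rfl | ⟨z₀, hz₀⟩
  · exact ⟨∅, empty_subset _, countable_empty, fun z hz => hz.elim⟩
  by_cases hmax : ∃ m ∈ E, ∀ z ∈ E, z ≤ m
  · obtain ⟨m, hm, hmax⟩ := hmax
    exact ⟨{m}, singleton_subset_iff.2 hm, countable_singleton m,
      fun z hz => ⟨m, rfl, hmax z hz⟩⟩
  push Not at hmax
  obtain ⟨s, hsc, hs⟩ := hd.exists_countable_isCofinal hY (ι := E)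
    (W := fun d => Iio (d : X) ∪ Eᶜ) (O := fun d => Ioi (d : X) ∩ E)
    (fun d d' hdd' => union_subset_union_left _ (Iio_subset_Iio hdd'))
    (fun d => isOpen_Iio.union hE.isClosed.isOpen_compl)
    (eq_univ_of_forall fun z => by
      by_cases hz : z ∈ E
      · obtain ⟨d, hd, hzd⟩ := hmax z hz
        exact mem_iUnion.2 ⟨⟨d, hd⟩, Or.inl hzd⟩
      · exact mem_iUnion.2 ⟨⟨z₀, hz₀⟩, Or.inr hz⟩)
    (fun d => isOpen_Ioi.inter hE.isOpen)
    (fun d => let ⟨z, hz, hdz⟩ := hmax d d.2; ⟨z, hdz, hz⟩)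
    (fun d d' hd'd => disjoint_left.2 fun z ⟨hdz, hz⟩ hz' =>
      hz'.elim (fun hzd' => (hd'd.trans (hdz.trans hzd')).false) (· hz))
  refine ⟨(↑) '' s, by rintro _ ⟨d, -, rfl⟩; exact d.2, hsc.image _, fun z hz => ?_⟩
  obtain ⟨t, ht, hzt⟩ := hs ⟨z, hz⟩
  exact ⟨t, mem_image_of_mem _ ht, hzt⟩

theorem IsClopen.exists_countable_forall_ge [LinearOrder X] [OrderClosedTopology X]
    (hd : Dense Y) (hY : LinearlyLindelof Y) {E : Set X} (hE : IsClopen E) :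
    ∃ T ⊆ E, T.Countable ∧ ∀ z ∈ E, ∃ t ∈ T, t ≤ z :=
  IsClopen.exists_countable_forall_le (X := Xᵒᵈ) hd hY hE

end LinearlyLindelof

section CountablyCovered

variable {X ι : Type*} (U : ι → Set X)

def CountablyCovered (s : Set X) : Prop :=
  ∃ r : Set ι, r.Countable ∧ s ⊆ ⋃ i ∈ r, U i

variable {U}

theorem CountablyCovered.mono {s t : Set X} (ht : CountablyCovered U t) (hst : s ⊆ t) :
    CountablyCovered U s :=
  let ⟨r, hrc, hr⟩ := ht; ⟨r, hrc, hst.trans hr⟩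

theorem countablyCovered_of_subset {s : Set X} {i : ι} (h : s ⊆ U i) : CountablyCovered U s :=
  ⟨{i}, countable_singleton i, by rwa [biUnion_singleton]⟩

theorem CountablyCovered.union {s t : Set X} (hs : CountablyCovered U s)
    (ht : CountablyCovered U t) : CountablyCovered U (s ∪ t) := by
  obtain ⟨r, hrc, hr⟩ := hs
  obtain ⟨r', hr'c, hr'⟩ := ht
  refine ⟨r ∪ r', hrc.union hr'c, ?_⟩
  rw [biUnion_union]
  exact union_subset_union hr hr'

theorem countablyCovered_biUnion {κ : Type*} {S : Set κ} (hS : S.Countable) {s : κ → Set X}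
    (h : ∀ k ∈ S, CountablyCovered U (s k)) : CountablyCovered U (⋃ k ∈ S, s k) := by
  choose! r hrc hr using h
  refine ⟨⋃ k ∈ S, r k, hS.biUnion hrc, iUnion₂_subset fun k hk => (hr k hk).trans ?_⟩
  exact biUnion_mono (subset_biUnion_of_mem hk) fun _ _ => subset_rfl

variable [LinearOrder X]

variable (U) in
def countablyCoveredClass (x : X) : Set X :=
  {y | CountablyCovered U (uIcc x y)}

theorem mem_countablyCoveredClass_self (hU : ⋃ i, U i = Set.univ) (x : X) :
    x ∈ countablyCoveredClass U x := by
  obtain ⟨i, hi⟩ := mem_iUnion.1 (hU ▸ mem_univ x)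
  exact countablyCovered_of_subset (by rwa [uIcc_self, singleton_subset_iff])

theorem countablyCoveredClass_eq_of_mem {x y : X} (h : y ∈ countablyCoveredClass U x) :
    countablyCoveredClass U y = countablyCoveredClass U x := by
  ext z
  constructor
  · intro hz
    exact (CountablyCovered.union h hz).mono uIcc_subset_uIcc_union_uIcc
  · intro hz
    exact (CountablyCovered.union (uIcc_comm x y ▸ h) hz).mono uIcc_subset_uIcc_union_uIcc

theorem pairwiseDisjoint_range_countablyCoveredClass :
    (range (countablyCoveredClass U)).PairwiseDisjoint id := by
  rintro _ ⟨x, rfl⟩ _ ⟨x', rfl⟩ hne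
  refine disjoint_left.2 fun z hz hz' => hne ?_
  rw [← countablyCoveredClass_eq_of_mem hz, countablyCoveredClass_eq_of_mem hz']

end CountablyCovered

section GOSpace

variable {X : Type u} [TopologicalSpace X] [LinearOrder X] {ι : Type*} {U : ι → Set X}

theorem isOpen_countablyCoveredClass
    (hconv : ∀ x : X, ∀ V ∈ 𝓝 x, ∃ C ∈ 𝓝 x, C.OrdConnected ∧ C ⊆ V)
    (hUo : ∀ i, IsOpen (U i)) (hU : ⋃ i, U i = Set.univ) (x : X) :
    IsOpen (countablyCoveredClass U x) := by
  refine isOpen_iff_mem_nhds.2 fun y hy => ?_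
  obtain ⟨i, hi⟩ := mem_iUnion.1 (hU ▸ mem_univ y)
  obtain ⟨C, hC, hCc, hCU⟩ := hconv y (U i) ((hUo i).mem_nhds hi)
  refine Filter.mem_of_superset hC fun z hz => ?_
  rw [← countablyCoveredClass_eq_of_mem hy]
  exact countablyCovered_of_subset ((hCc.uIcc_subset (mem_of_mem_nhds hC) hz).trans hCU)

theorem isClopen_countablyCoveredClass
    (hconv : ∀ x : X, ∀ V ∈ 𝓝 x, ∃ C ∈ 𝓝 x, C.OrdConnected ∧ C ⊆ V)
    (hUo : ∀ i, IsOpen (U i)) (hU : ⋃ i, U i = Set.univ) (x : X) :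
    IsClopen (countablyCoveredClass U x) := by
  refine ⟨isOpen_compl_iff.1 <| isOpen_iff_mem_nhds.2 fun y hy => ?_,
    isOpen_countablyCoveredClass hconv hUo hU x⟩
  refine Filter.mem_of_superset ((isOpen_countablyCoveredClass hconv hUo hU y).mem_nhds
    (mem_countablyCoveredClass_self hU y)) fun z hzy hzx => hy ?_
  rw [← countablyCoveredClass_eq_of_mem hzx, countablyCoveredClass_eq_of_mem hzy]
  exact mem_countablyCoveredClass_self hU y

theorem countablyCovered_countablyCoveredClass [OrderClosedTopology X] {Y : Set X}
    (hd : Dense Y) (hY : LinearlyLindelof Y)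
    (hconv : ∀ x : X, ∀ V ∈ 𝓝 x, ∃ C ∈ 𝓝 x, C.OrdConnected ∧ C ⊆ V)
    (hUo : ∀ i, IsOpen (U i)) (hU : ⋃ i, U i = Set.univ) (x : X) :
    CountablyCovered U (countablyCoveredClass U x) := by
  have hE := isClopen_countablyCoveredClass hconv hUo hU x
  obtain ⟨T, hTE, hTc, hT⟩ := hE.exists_countable_forall_le hd hY
  obtain ⟨T', hT'E, hT'c, hT'⟩ := hE.exists_countable_forall_ge hd hY
  refine (countablyCovered_biUnion (s := fun p : X × X => uIcc p.1 p.2) (hT'c.prod hTc)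
    fun p hp => ?_).mono fun z hz => ?_
  · show p.2 ∈ countablyCoveredClass U p.1
    rw [countablyCoveredClass_eq_of_mem (hT'E hp.1)]
    exact hTE hp.2
  · obtain ⟨t, ht, hzt⟩ := hT z hz
    obtain ⟨t', ht', ht'z⟩ := hT' z hz
    exact mem_biUnion (show (t', t) ∈ T' ×ˢ T from ⟨ht', ht⟩) (Icc_subset_uIcc ⟨ht'z, hzt⟩)

theorem lindelofSpace_of_dense_linearlyLindelof [OrderClosedTopology X]
    (hconv : ∀ x : X, ∀ V ∈ 𝓝 x, ∃ C ∈ 𝓝 x, C.OrdConnected ∧ C ⊆ V) {Y : Set X}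
    (hd : Dense Y) (hY : LinearlyLindelof Y) : LindelofSpace X := by
  refine ⟨isLindelof_iff_countable_subcover.2 fun U hUo hU => ?_⟩
  replace hU : ⋃ i, U i = Set.univ := univ_subset_iff.1 hU
  have hQc : (range (countablyCoveredClass U)).Countable :=
    hd.countable_of_pairwiseDisjoint hY
      (forall_mem_range.2 (isOpen_countablyCoveredClass hconv hUo hU))
      (forall_mem_range.2 fun x => ⟨x, mem_countablyCoveredClass_self hU x⟩)
      pairwiseDisjoint_range_countablyCoveredClass
      (eq_univ_of_forall fun x => ⟨_, mem_range_self x, mem_countablyCoveredClass_self hU x⟩)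
  obtain ⟨r, hrc, hr⟩ := (countablyCovered_biUnion (s := id) hQc fun _ ⟨x, hx⟩ =>
    hx ▸ countablyCovered_countablyCoveredClass hd hY hconv hUo hU x).mono
      fun x _ => mem_biUnion (mem_range_self x) (mem_countablyCoveredClass_self hU x)
  exact ⟨r, hrc, hr⟩

end GOSpace

/-- A GO space (a space embedding into a linear order with its order topology)
with a dense linearly Lindelöf subspace is Lindelöf. -/
theorem GO_dense_linearlyLindelof_isLindelof
    (X : Type u) [TopologicalSpace X] (L : Type u) [LinearOrder L]
    [TopologicalSpace L] [OrderTopology L] (e : X → L) (he : IsEmbedding e)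
    (Y : Set X) (hdense : Dense Y) (hY : LinearlyLindelof Y) :
    LindelofSpace X := by
  let : LinearOrder X := LinearOrder.lift' e he.injective
  have he_mono : Monotone e := fun _ _ h => h
  have : OrderClosedTopology X :=
    ⟨isClosed_le_prod.preimage (he.continuous.prodMap he.continuous)⟩
  refine lindelofSpace_of_dense_linearlyLindelof (fun x V hV => ?_) hdense hY
  rw [he.nhds_eq_comap, Filter.mem_comap] at hV
  obtain ⟨t, ht, htV⟩ := hV
  exact ⟨e ⁻¹' ordConnectedComponent t (e x),
    he.continuous.continuousAt (ordConnectedComponent_mem_nhds.2 ht),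
    OrdConnected.preimage_mono inferInstance he_mono,
    (preimage_mono ordConnectedComponent_subset).trans htV⟩
end

section
/- Let X be a Hausdorff space such that the co-diagonal Δ^c_X = (X × X) \ Δ_X is discretely Lindelöf. Then the hereditary Lindelöf number of X is at most 𝔠 = 2^ℵ₀ (i.e. every open cover of every subspace of X has a subcover of cardinality at most 𝔠), and consequently |X| ≤ 2^𝔠. -/
/-!
If `D ⊆ X` is discrete, the off-diagonal part of `closure D × closure D` lies in the closure of
the discrete set `(D × D) ∖ Δ` of the co-diagonal, so it is Lindelöf. Countably many boxes
`U × V` with disjoint sides cover it, and these separate the points of `closure D`; hence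
`|closure D| ≤ 𝔠`. A right-separated family contains a left-separated subfamily whose closure
contains the whole family; the subfamily is discrete, so right-separated families have at
most `𝔠` members. This bounds the hereditary Lindelöf number by `𝔠`, and de Groot's
ramification argument gives `|X| ≤ 2 ^ 𝔠`: a branch of the binary tree obtained by splitting
every node with two Hausdorff-separated points is right-separated, so it stops before `𝔠⁺`.
-/

open Set Topology Cardinal

universe u

/-- The co-diagonal of `X`: the complement of the diagonal in `X × X`. -/
def codiag (X : Type u) [TopologicalSpace X] : Set (X × X) := {p | p.1 ≠ p.2}

/-- A space is discretely Lindelöf if the closure of every discrete subset is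
Lindelöf. -/
def DiscretelyLindelof (Z : Type u) [TopologicalSpace Z] : Prop :=
  ∀ D : Set Z, DiscreteTopology D → IsLindelof (closure D)

variable {X : Type u} [TopologicalSpace X]

theorem isOpen_codiag [T2Space X] : IsOpen (codiag X) := isClosed_diagonal.isOpen_compl

theorem mk_le_continuum_of_isLindelof_codiag_inter [T2Space X] {K : Set X}
    (hK : IsLindelof (codiag X ∩ K ×ˢ K)) : #K ≤ 𝔠 := by
  choose U V hU hV hpU hpV hUV using fun p (hp : p ∈ codiag X) => t2_separation hp
  obtain ⟨t, ht, hcover⟩ := hK.elim_nhds_subcover' (fun p hp => U p hp.1 ×ˢ V p hp.1)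
    fun p hp => ((hU p hp.1).prod (hV p hp.1)).mem_nhds ⟨hpU p hp.1, hpV p hp.1⟩
  -- `x ∈ K` is recovered from the boxes of the subcover whose first side contains it
  have hinj : Function.Injective fun x : K => {q : t | (x : X) ∈ U q q.1.2.1} := by
    intro x y hxy
    by_contra hne
    obtain ⟨q, hq, hxq⟩ := mem_iUnion₂.1
      (hcover (a := ((x : X), (y : X))) ⟨Subtype.coe_ne_coe.2 hne, x.2, y.2⟩)
    have := (Set.ext_iff.1 hxy ⟨q, hq⟩).1 hxq.1
    exact (hUV q q.2.1).ne_of_mem this hxq.2 rfl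
  calc #K ≤ #(Set t) := mk_le_of_injective hinj
    _ = 2 ^ #t := mk_set
    _ ≤ 2 ^ ℵ₀ := power_le_power_left two_ne_zero (mk_le_aleph0_iff.2 ht.to_subtype)
    _ = 𝔠 := two_power_aleph0

theorem mk_closure_le_continuum [T2Space X] (h : DiscretelyLindelof (codiag X)) {D : Set X}
    [DiscreteTopology D] : #(closure D) ≤ 𝔠 := by
  let D' : Set (codiag X) := Subtype.val ⁻¹' (D ×ˢ D)
  have : DiscreteTopology ↥(D ×ˢ D) := (Homeomorph.Set.prod D D).symm.discreteTopology
  have hD' : DiscreteTopology D' :=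
    .preimage_of_continuous_injective _ continuous_subtype_val Subtype.val_injective
  have hE : IsLindelof (Subtype.val ⁻¹' (closure D ×ˢ closure D) : Set (codiag X)) := by
    refine (h D' hD').of_isClosed_subset
      ((isClosed_closure.prod isClosed_closure).preimage continuous_subtype_val) fun q hq => ?_
    rw [closure_subtype, Subtype.image_preimage_coe]
    exact isOpen_codiag.inter_closure ⟨q.2, by rwa [closure_prod_eq]⟩
  apply mk_le_continuum_of_isLindelof_codiag_inter
  rw [← Subtype.image_preimage_coe]
  exact hE.image continuous_subtype_val

def IsRightSeparated {ι : Type*} [LT ι] (p : ι → X) : Prop :=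
  ∀ i, ∃ U, IsOpen U ∧ p i ∈ U ∧ ∀ j, i < j → p j ∉ U

theorem IsRightSeparated.injective {ι : Type*} [LinearOrder ι] {p : ι → X}
    (hp : IsRightSeparated p) : Function.Injective p := by
  intro i j hij
  by_contra hne
  rcases lt_or_gt_of_ne hne with hlt | hlt
  · obtain ⟨U, -, hi, hU⟩ := hp i
    exact hU j hlt (hij ▸ hi)
  · obtain ⟨U, -, hj, hU⟩ := hp j
    exact hU i hlt (hij ▸ hj)

theorem exists_set_forall_mem_iff_inter_Iio {ι : Type*} [Preorder ι] [WellFoundedLT ι]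
    (P : ι → Set ι → Prop) : ∃ A : Set ι, ∀ i, i ∈ A ↔ P i (A ∩ Iio i) := by
  let F : ι → Prop := wellFounded_lt.fix fun i IH => P i {j | ∃ h : j < i, IH j h}
  refine ⟨{i | F i}, fun i => ?_⟩
  change F i ↔ _
  rw [show F i = _ from wellFounded_lt.fix_eq _ i]
  congr! 1
  ext j
  exact ⟨fun ⟨hj, h⟩ => ⟨h, hj⟩, fun ⟨h, hj⟩ => ⟨hj, h⟩⟩

theorem IsRightSeparated.mk_range_le {κ : Cardinal.{u}}
    (hκ : ∀ D : Set X, DiscreteTopology D → #(closure D) ≤ κ)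
    {ι : Type*} [LinearOrder ι] [WellFoundedLT ι] {p : ι → X} (hp : IsRightSeparated p) :
    #(range p) ≤ κ := by
  choose O hO hpO hOp using hp
  -- `p '' A` is left-separated by construction and right-separated by `hp`, hence discrete,
  -- and every `p i` lies in its closure
  obtain ⟨A, hA⟩ := exists_set_forall_mem_iff_inter_Iio fun i B => p i ∉ closure (p '' B)
  have hdisc : DiscreteTopology (p '' A) := by
    rw [discreteTopology_subtype_iff']
    rintro _ ⟨i, hi, rfl⟩
    refine ⟨O i \ closure (p '' (A ∩ Iio i)), (hO i).sdiff isClosed_closure, subset_antisymm ?_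
      (singleton_subset_iff.2 ⟨⟨hpO i, (hA i).1 hi⟩, mem_image_of_mem p hi⟩)⟩
    rintro _ ⟨⟨hOj, hcl⟩, j, hj, rfl⟩
    rcases lt_trichotomy j i with hji | rfl | hij
    · exact absurd (subset_closure (mem_image_of_mem p (mem_inter hj hji))) hcl
    · rfl
    · exact absurd hOj (hOp i j hij)
  have hrange : range p ⊆ closure (p '' A) := by
    rintro _ ⟨i, rfl⟩
    by_cases hi : i ∈ A
    · exact subset_closure (mem_image_of_mem p hi)
    · exact closure_mono (image_mono inter_subset_left) (not_not.1 (mt (hA i).2 hi))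
  exact (mk_le_mk_of_subset hrange).trans (hκ _ hdisc)

theorem IsRightSeparated.mk_le {κ : Cardinal.{u}}
    (hκ : ∀ D : Set X, DiscreteTopology D → #(closure D) ≤ κ)
    {ι : Type u} [LinearOrder ι] [WellFoundedLT ι] {p : ι → X} (hp : IsRightSeparated p) :
    #ι ≤ κ :=
  mk_range_eq p hp.injective ▸ hp.mk_range_le hκ

theorem exists_biUnion_subcover_card_le {κ : Cardinal.{u}}
    (hκ : ∀ (ι : Type u) [LinearOrder ι] [WellFoundedLT ι] (p : ι → X),
      IsRightSeparated p → #ι ≤ κ)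
    {ι : Type u} [LinearOrder ι] [WellFoundedLT ι] (U : ι → Set X) (hU : ∀ i, IsOpen (U i))
    {Y : Set X} (hY : Y ⊆ ⋃ i, U i) : ∃ A : Set ι, #A ≤ κ ∧ Y ⊆ ⋃ i ∈ A, U i := by
  let A := {i | ∃ y ∈ Y ∩ U i, ∀ j < i, y ∉ U j}
  choose y hy using fun a : A => a.2
  refine ⟨A, hκ A y fun a => ⟨U a, hU a, (hy a).1.2, fun b hab => (hy b).2 a hab⟩,
    fun x hx => ?_⟩
  obtain ⟨i, hxi, hmin⟩ := wellFounded_lt.has_min {i | x ∈ U i} (mem_iUnion.1 (hY hx))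
  exact mem_biUnion (x := i) ⟨x, ⟨hx, hxi⟩, fun j hj hxj => hmin j hxj hj⟩ hxi

theorem exists_sUnion_subcover_card_le {κ : Cardinal.{u}}
    (hκ : ∀ (ι : Type u) [LinearOrder ι] [WellFoundedLT ι] (p : ι → X),
      IsRightSeparated p → #ι ≤ κ)
    (Y : Set X) (𝒰 : Set (Set X)) (hopen : ∀ U ∈ 𝒰, IsOpen U) (hcov : Y ⊆ ⋃₀ 𝒰) :
    ∃ 𝒱 ⊆ 𝒰, #𝒱 ≤ κ ∧ Y ⊆ ⋃₀ 𝒱 := by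
  obtain ⟨_, _⟩ := exists_wellFoundedLT 𝒰
  obtain ⟨A, hA, hYA⟩ := exists_biUnion_subcover_card_le hκ (Subtype.val : 𝒰 → Set X)
    (fun U => hopen U U.2) (sUnion_eq_iUnion ▸ hcov)
  refine ⟨Subtype.val '' A, by simp, mk_image_le.trans hA, ?_⟩
  rwa [sUnion_image]

structure Splitting (X : Type*) [TopologicalSpace X] where
  left : Set X → Set X
  right : Set X → Set X
  isOpen_left (F : Set X) : IsOpen (left F)
  isOpen_right (F : Set X) : IsOpen (right F)
  disjoint (F : Set X) : Disjoint (left F) (right F)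
  left_inter_nonempty {F : Set X} : F.Nontrivial → (left F ∩ F).Nonempty
  right_inter_nonempty {F : Set X} : F.Nontrivial → (right F ∩ F).Nonempty

namespace Splitting

theorem nonempty [T2Space X] : Nonempty (Splitting X) := by
  have : ∀ F : Set X, ∃ W : Set X × Set X, IsOpen W.1 ∧ IsOpen W.2 ∧ Disjoint W.1 W.2 ∧
      (F.Nontrivial → (W.1 ∩ F).Nonempty ∧ (W.2 ∩ F).Nonempty) := by
    intro F
    by_cases hF : F.Nontrivial
    · obtain ⟨x, hx, y, hy, hxy⟩ := hF
      obtain ⟨U, V, hU, hV, hxU, hyV, hUV⟩ := t2_separation hxy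
      exact ⟨(U, V), hU, hV, hUV, fun _ => ⟨⟨x, hxU, hx⟩, ⟨y, hyV, hy⟩⟩⟩
    · exact ⟨(∅, ∅), isOpen_empty, isOpen_empty, by simp, hF.elim⟩
  choose W hW₁ hW₂ hW hWF using this
  exact ⟨⟨fun F => (W F).1, fun F => (W F).2, hW₁, hW₂, hW,
    fun hF => (hWF _ hF).1, fun hF => (hWF _ hF).2⟩⟩

variable (σ : Splitting X)

open scoped Classical in
def cut (F : Set X) (x : X) : Set X := if x ∈ σ.left F then σ.right F else σ.left F

theorem isOpen_cut (F : Set X) (x : X) : IsOpen (σ.cut F x) := by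
  unfold cut; split_ifs
  exacts [σ.isOpen_right F, σ.isOpen_left F]

theorem notMem_cut (F : Set X) (x : X) : x ∉ σ.cut F x := by
  unfold cut; split_ifs with hx
  exacts [(σ.disjoint F).notMem_of_mem_left hx, hx]

theorem cut_inter_nonempty {F : Set X} (hF : F.Nontrivial) (x : X) :
    (σ.cut F x ∩ F).Nonempty := by
  unfold cut; split_ifs
  exacts [σ.right_inter_nonempty hF, σ.left_inter_nonempty hF]

theorem cut_eq_cut {F : Set X} {x y : X} (h : x ∈ σ.left F ↔ y ∈ σ.left F) :
    σ.cut F x = σ.cut F y := by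
  rw [cut, cut, h]

variable {ι : Type*} [Preorder ι] [WellFoundedLT ι]

/-- de Groot's ramification: `σ.node x i` is the node at level `i` of the branch through `x`;
passing a level removes the side of the current node's split that lies away from `x`. -/
noncomputable def node (x : X) : ι → Set X :=
  wellFounded_lt.fix fun i N => ⋂ (j) (hj : j < i), N j hj \ σ.cut (N j hj) x

theorem node_eq (x : X) (i : ι) :
    σ.node x i = ⋂ j < i, σ.node x j \ σ.cut (σ.node x j) x :=
  wellFounded_lt.fix_eq _ i

theorem mem_node (x : X) (i : ι) : x ∈ σ.node x i := by
  induction i using WellFoundedLT.induction with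
  | _ i IH =>
    rw [node_eq]
    exact mem_iInter₂.2 fun j hj => ⟨IH j hj, σ.notMem_cut _ x⟩

theorem node_subset {x : X} {i j : ι} (hji : j < i) :
    σ.node x i ⊆ σ.node x j \ σ.cut (σ.node x j) x := by
  rw [node_eq]
  exact biInter_subset_of_mem hji

theorem node_eq_node {x y : X} {i : ι}
    (h : ∀ j < i, (x ∈ σ.left (σ.node x j) ↔ y ∈ σ.left (σ.node y j))) :
    σ.node x i = σ.node y i := by
  induction i using WellFoundedLT.induction with
  | _ i IH =>
    rw [node_eq, node_eq]
    refine iInter₂_congr fun j hj => ?_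
    have hnode := IH j hj fun k hk => h k (hk.trans hj)
    have hside := h j hj
    rw [hnode] at hside ⊢
    rw [σ.cut_eq_cut hside]

theorem isRightSeparated_of_forall_nontrivial {x : X} (hx : ∀ i : ι, (σ.node x i).Nontrivial) :
    ∃ p : ι → X, IsRightSeparated p := by
  choose p hp using fun i => σ.cut_inter_nonempty (hx i) x
  exact ⟨p, fun i =>
    ⟨_, σ.isOpen_cut _ x, (hp i).1, fun j hij => (σ.node_subset hij (hp j).2).2⟩⟩

end Splitting

theorem mk_le_two_power_of_isRightSeparated [T2Space X] {κ : Cardinal.{u}} (hκ₀ : ℵ₀ ≤ κ)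
    (hκ : ∀ (ι : Type u) [LinearOrder ι] [WellFoundedLT ι] (p : ι → X),
      IsRightSeparated p → #ι ≤ κ) :
    #X ≤ 2 ^ κ := by
  obtain ⟨σ⟩ := Splitting.nonempty (X := X)
  let ι := (Order.succ κ).ord.ToType
  have hι : #ι = Order.succ κ := by simp [ι]
  have hheight : ∀ x : X, ∃ i : ι, (σ.node x i).Subsingleton := by
    intro x
    by_contra! hx
    obtain ⟨p, hp⟩ := σ.isRightSeparated_of_forall_nontrivial hx
    exact (Order.lt_succ κ).not_ge (hι ▸ hκ ι p hp)
  choose m hm using hheight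
  have hIio (i : ι) : #(Iio i) ≤ κ := by
    simpa [hι, Order.lt_succ_iff] using mk_Iio_lt i (by simp [ι])
  -- `x` is determined by its height `m x` and the sides it takes below that height
  have hfiber (i : ι) : #(m ⁻¹' {i}) ≤ 2 ^ κ := by
    have hinj : Function.Injective fun x : m ⁻¹' {i} =>
        {j : Iio i | (x : X) ∈ σ.left (σ.node x (j : ι))} := by
      rintro ⟨x, rfl⟩ ⟨y, hy⟩ hxy
      have hnode : σ.node x (m x) = σ.node y (m x) :=
        σ.node_eq_node fun j hj => Set.ext_iff.1 hxy ⟨j, hj⟩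
      exact Subtype.ext (hm x (σ.mem_node x _) (hnode ▸ σ.mem_node y _))
    calc #(m ⁻¹' {i}) ≤ #(Set (Iio i)) := mk_le_of_injective hinj
      _ = 2 ^ #(Iio i) := mk_set
      _ ≤ 2 ^ κ := power_le_power_left two_ne_zero (hIio i)
  calc #X ≤ #ι * 2 ^ κ := mk_le_mk_mul_of_mk_preimage_le m hfiber
    _ ≤ 2 ^ κ * 2 ^ κ := by
        gcongr
        exact hι ▸ Order.succ_le_of_lt (cantor κ)
    _ = 2 ^ κ := mul_eq_self (hκ₀.trans (cantor κ).le)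

/-- If `X` is Hausdorff and its co-diagonal is discretely Lindelöf, then the
hereditary Lindelöf number of `X` is at most `𝔠` and `|X| ≤ 2 ^ 𝔠`. -/
theorem codiag_discretelyLindelof_hl_le_continuum
    (X : Type u) [TopologicalSpace X] [T2Space X]
    (h : DiscretelyLindelof ↥(codiag X)) :
    (∀ (Y : Set X) (𝒰 : Set (Set X)), (∀ U ∈ 𝒰, IsOpen U) → Y ⊆ ⋃₀ 𝒰 →
      ∃ 𝒱 ⊆ 𝒰, #↥𝒱 ≤ Cardinal.continuum ∧ Y ⊆ ⋃₀ 𝒱) ∧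
    #X ≤ 2 ^ Cardinal.continuum := by
  have hrs : ∀ (ι : Type u) [LinearOrder ι] [WellFoundedLT ι] (p : ι → X),
      IsRightSeparated p → #ι ≤ 𝔠 :=
    fun _ _ _ _ hp => hp.mk_le fun _ _ => mk_closure_le_continuum h
  exact ⟨exists_sUnion_subcover_card_le hrs,
    mk_le_two_power_of_isRightSeparated aleph0_le_continuum hrs⟩
end

section
/- Let X be an almost discretely Lindelöf Hausdorff space with countable pseudocharacter (every point of X is the intersection of countably many open sets) and countable tightness (whenever x lies in the closure of a set A ⊆ X, there is a countable B ⊆ A with x in the closure of B). Then |X| ≤ 2^𝔠, where 𝔠 = 2^ℵ₀. -/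
open Set Topology Cardinal

universe u

/-- A space has countable pseudocharacter if every point is the intersection of
countably many open sets. -/
def CountablePseudocharacter (X : Type u) [TopologicalSpace X] : Prop :=
  ∀ x : X, ∃ 𝒰 : Set (Set X), 𝒰.Countable ∧ (∀ U ∈ 𝒰, IsOpen U ∧ x ∈ U) ∧
    ⋂₀ 𝒰 = {x}

/-- A space has countable tightness if every point in the closure of a set lies
in the closure of a countable subset. -/
def CountableTightness (X : Type u) [TopologicalSpace X] : Prop :=
  ∀ (A : Set X) (x : X), x ∈ closure A →
    ∃ B ⊆ A, B.Countable ∧ x ∈ closure B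

/-!
If `#X > 2 ^ 𝔠`, the Erdős–Rado theorem `(2 ^ 𝔠)⁺ → (𝔠⁺)²_ℵ₀` applied to the colouring of a
pair `x < y` by the indices of pseudobase sets at `x` missing `y` and at `y` missing `x` yields a
homogeneous set of size `𝔠⁺`. It is discrete, since one fixed pair of pseudobase sets isolates each
of its points, so it lies in a Lindelöf subspace, which has size at most `𝔠` by the
Arhangel'skii–Šapirovskii argument: a set of size `≤ 𝔠` closed under closures of countable subsets
and meeting the complement of every non-covering countable family of pseudobase sets centred in it
is closed, hence Lindelöf, hence everything. Closures of countable sets have size `≤ 𝔠` because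
points of a Lindelöf Hausdorff space have countable closed pseudocharacter.
-/
open Order

namespace Cardinal

theorem mk_countable_subsets_le_continuum {α : Type u} {s : Set α} (hs : #s ≤ 𝔠) :
    #{t : Set α // t ⊆ s ∧ t.Countable} ≤ 𝔠 := by
  simp_rw [← le_aleph0_iff_set_countable]
  calc #{t : Set α // t ⊆ s ∧ #t ≤ ℵ₀} ≤ max #s ℵ₀ ^ ℵ₀ := mk_bounded_subset_le s ℵ₀
    _ ≤ 𝔠 ^ ℵ₀ := power_le_power_right (max_le hs aleph0_le_continuum)
    _ = 𝔠 := continuum_power_aleph0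

theorem mk_Iio_succ_ord_toType_le {c : Cardinal.{u}} (w : (succ c).ord.ToType) :
    #(Iio w) ≤ c :=
  Order.lt_succ_iff.mp (by simpa using mk_Iio_lt w)

theorem exists_forall_lt_of_countable_succ_aleph0 {s : Set (succ ℵ₀ : Cardinal.{u}).ord.ToType}
    (hs : s.Countable) : ∃ a, ∀ b ∈ s, b < a := by
  refine not_isCofinal_iff.mp fun hcof => (cof_le hcof).not_gt ?_
  rw [← Ordinal.cof_type, Ordinal.type_toType, (isRegular_succ le_rfl).cof_ord]
  exact Order.lt_succ_iff.mpr hs.le_aleph0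

end Cardinal

theorem exists_mk_le_forall_countable_apply_subset {α : Type u} {κ : Cardinal.{u}} (hκ : ℵ₀ < κ)
    {g : Set α → Set α} (hg : Monotone g) (hcard : ∀ S : Set α, #S ≤ κ → #(g S) ≤ κ) :
    ∃ Y : Set α, #Y ≤ κ ∧ ∀ B ⊆ Y, B.Countable → g B ⊆ Y := by
  let I := (succ ℵ₀ : Cardinal.{u}).ord.ToType
  let F : I → Set α := WellFoundedLT.fix fun w F => g (⋃ v : Iio w, F v v.2)
  have hF (w : I) : F w = g (⋃ v : Iio w, F v) := WellFoundedLT.fix_eq _ w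
  have hFcard (w : I) : #(F w) ≤ κ := by
    induction w using WellFoundedLT.induction with
    | _ w ih =>
      rw [hF]
      refine hcard _ ?_
      calc #(⋃ v : Iio w, F v) ≤ #(Iio w) * ⨆ v : Iio w, #(F v) := mk_iUnion_le _
        _ ≤ κ * κ := mul_le_mul' ((mk_Iio_succ_ord_toType_le w).trans hκ.le)
            (ciSup_le' fun v => ih v v.2)
        _ = κ := mul_eq_self hκ.le
  refine ⟨⋃ w, F w, ?_, fun B hBY hB => ?_⟩
  · calc #(⋃ w, F w) ≤ #I * ⨆ w, #(F w) := mk_iUnion_le _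
      _ ≤ κ * κ := mul_le_mul' (by rw [mk_ord_toType]; exact succ_le_of_lt hκ) (ciSup_le' hFcard)
      _ = κ := mul_eq_self hκ.le
  · choose stage hstage using fun b : B => mem_iUnion.mp (hBY b.2)
    have := hB.to_subtype
    obtain ⟨w, hw⟩ := exists_forall_lt_of_countable_succ_aleph0 (countable_range stage)
    have hBw : B ⊆ ⋃ v : Iio w, F v := fun b hb =>
      mem_iUnion.mpr ⟨⟨stage ⟨b, hb⟩, hw _ (mem_range_self _)⟩, hstage _⟩
    exact (hg hBw).trans ((hF w).symm.subset.trans (subset_iUnion F w))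

def CountableClosedPseudocharacter (X : Type u) [TopologicalSpace X] : Prop :=
  ∀ x : X, ∃ 𝒰 : Set (Set X), 𝒰.Countable ∧ (∀ U ∈ 𝒰, IsOpen U ∧ x ∈ U) ∧
    ⋂ U ∈ 𝒰, closure U = {x}

section Topology

variable {X : Type u} [TopologicalSpace X]

theorem CountablePseudocharacter.subtype (h : CountablePseudocharacter X) (s : Set X) :
    CountablePseudocharacter s := by
  intro x
  obtain ⟨𝒰, h𝒰c, h𝒰, h𝒰x⟩ := h x
  refine ⟨(Subtype.val ⁻¹' ·) '' 𝒰, h𝒰c.image _, forall_mem_image.2 fun U hU =>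
    ⟨(h𝒰 U hU).1.preimage continuous_subtype_val, (h𝒰 U hU).2⟩, ?_⟩
  rw [sInter_image, ← preimage_iInter₂, ← sInter_eq_biInter, h𝒰x]
  ext
  simp [Subtype.ext_iff]

theorem CountableTightness.subtype (h : CountableTightness X) (s : Set X) :
    CountableTightness s := by
  intro A x hx
  rw [closure_subtype] at hx
  obtain ⟨B, hBA, hBc, hxB⟩ := h _ _ hx
  refine ⟨Subtype.val ⁻¹' B ∩ A, inter_subset_right,
    (hBc.preimage Subtype.val_injective).mono inter_subset_left, ?_⟩
  rwa [closure_subtype, image_preimage_inter, inter_eq_left.mpr hBA]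

theorem CountablePseudocharacter.exists_seq (h : CountablePseudocharacter X) :
    ∃ (V : X → ℕ → Set X) (c : X → X → ℕ), (∀ x n, IsOpen (V x n) ∧ x ∈ V x n) ∧
      ∀ x y, y ≠ x → y ∉ V x (c x y) := by
  have hseq (x : X) : ∃ V : ℕ → Set X, (∀ n, IsOpen (V n) ∧ x ∈ V n) ∧
      ∀ y, y ≠ x → ∃ n, y ∉ V n := by
    obtain ⟨𝒰, h𝒰c, h𝒰, h𝒰x⟩ := h x
    obtain ⟨V, hV⟩ := (h𝒰c.insert Set.univ).exists_eq_range (insert_nonempty _ _)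
    refine ⟨V, fun n => ?_, fun y hy => ?_⟩
    · rcases (hV ▸ mem_range_self n : V n ∈ insert Set.univ 𝒰) with h | h
      · simp [h]
      · exact h𝒰 _ h
    · have hy' : y ∉ ⋂₀ 𝒰 := h𝒰x ▸ hy
      obtain ⟨U, hU, hyU⟩ : ∃ U ∈ 𝒰, y ∉ U := by
        simpa only [mem_sInter, not_forall, exists_prop] using hy'
      obtain ⟨n, rfl⟩ : U ∈ range V := hV ▸ mem_insert_of_mem _ hU
      exact ⟨n, hyU⟩
  choose V hV hc using hseq
  choose! c hc using hc
  exact ⟨V, c, hV, hc⟩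

theorem IsLindelof.exists_countable_disjoint_iInter_closure [T2Space X] {K : Set X}
    (hK : IsLindelof K) {x : X} (hx : x ∉ K) :
    ∃ 𝒰 : Set (Set X), 𝒰.Countable ∧ (∀ U ∈ 𝒰, IsOpen U ∧ x ∈ U) ∧
      Disjoint K (⋂ U ∈ 𝒰, closure U) := by
  have sep (y : X) (hy : y ∈ K) : ∃ U, IsOpen U ∧ x ∈ U ∧ y ∉ closure U := by
    obtain ⟨u, v, hu, hv, hxu, hyv, huv⟩ := t2_separation (ne_of_mem_of_not_mem hy hx).symm
    exact ⟨u, hu, hxu, (huv.symm.closure_right hv).notMem_of_mem_left hyv⟩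
  choose! U hU using sep
  obtain ⟨t, htc, htK, hKt⟩ := hK.elim_nhds_subcover (fun y => (closure (U y))ᶜ)
    fun y hy => isClosed_closure.isOpen_compl.mem_nhds (hU y hy).2.2
  refine ⟨U '' t, htc.image U,
    forall_mem_image.2 fun y hy => ⟨(hU y (htK y hy)).1, (hU y (htK y hy)).2.1⟩, ?_⟩
  refine Set.disjoint_left.2 fun z hz hzU => ?_
  obtain ⟨y, hy, hzy⟩ := mem_iUnion₂.mp (hKt hz)
  exact hzy (mem_iInter₂.mp hzU (U y) (mem_image_of_mem U hy))

theorem CountablePseudocharacter.countableClosedPseudocharacter [T2Space X] [LindelofSpace X]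
    (h : CountablePseudocharacter X) : CountableClosedPseudocharacter X := by
  intro x
  obtain ⟨𝒰, h𝒰c, h𝒰, h𝒰x⟩ := h x
  have h𝒰𝒲 (U : Set X) (hU : U ∈ 𝒰) : ∃ 𝒲 : Set (Set X), 𝒲.Countable ∧
      (∀ W ∈ 𝒲, IsOpen W ∧ x ∈ W) ∧ Disjoint Uᶜ (⋂ W ∈ 𝒲, closure W) :=
    (h𝒰 U hU).1.isClosed_compl.isLindelof.exists_countable_disjoint_iInter_closure
      (not_not_intro (h𝒰 U hU).2)
  choose! 𝒲 h𝒲c h𝒲 hdisj using h𝒰𝒲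
  have h𝒲' : ∀ W ∈ ⋃ U ∈ 𝒰, 𝒲 U, IsOpen W ∧ x ∈ W := by
    simp only [mem_iUnion₂]
    rintro W ⟨U, hU, hW⟩
    exact h𝒲 U hU W hW
  refine ⟨⋃ U ∈ 𝒰, 𝒲 U, h𝒰c.biUnion h𝒲c, h𝒲', Subset.antisymm ?_ ?_⟩
  · refine h𝒰x ▸ subset_sInter fun U hU => ?_
    exact (biInter_mono (subset_biUnion_of_mem hU) fun _ _ => le_rfl).trans
      (disjoint_compl_left_iff_subset.mp (hdisj U hU))
  · exact singleton_subset_iff.2 (mem_iInter₂.2 fun W hW => subset_closure (h𝒲' W hW).2)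

theorem CountableClosedPseudocharacter.mk_closure_le_continuum
    (h : CountableClosedPseudocharacter X) {B : Set X} (hB : B.Countable) :
    #(closure B) ≤ 𝔠 := by
  choose 𝒲 h𝒲c h𝒲 h𝒲x using h
  let trace (x : closure B) : {𝒯 : Set (Set B) // 𝒯 ⊆ univ ∧ 𝒯.Countable} :=
    ⟨(Subtype.val ⁻¹' ·) '' 𝒲 x, subset_univ _, (h𝒲c x).image _⟩
  have htrace : Function.Injective trace := by
    rintro ⟨x, hx⟩ ⟨y, hy⟩ hxy
    have hxy' : (Subtype.val ⁻¹' ·) '' 𝒲 x = (Subtype.val ⁻¹' ·) '' 𝒲 y :=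
      congrArg Subtype.val hxy
    suffices y ∈ ⋂ W ∈ 𝒲 x, closure W by
      rw [h𝒲x] at this
      exact Subtype.ext (eq_of_mem_singleton this).symm
    refine mem_iInter₂.2 fun W hW => ?_
    obtain ⟨W', hW', hWW'⟩ := hxy' ▸ mem_image_of_mem (Subtype.val ⁻¹' ·) hW
    rw [Subtype.preimage_coe_eq_preimage_coe_iff] at hWW'
    have hy' : y ∈ closure (B ∩ W') :=
      inter_comm W' B ▸ (h𝒲 y W' hW').1.inter_closure ⟨(h𝒲 y W' hW').2, hy⟩
    exact closure_mono (hWW' ▸ inter_subset_right) hy'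
  calc #(closure B) ≤ #{𝒯 : Set (Set B) // 𝒯 ⊆ univ ∧ 𝒯.Countable} := mk_le_of_injective htrace
    _ ≤ 𝔠 := mk_countable_subsets_le_continuum <| by
      rw [mk_univ, mk_set, ← two_power_aleph0]
      exact power_le_power_left two_ne_zero hB.le_aleph0

theorem CountableTightness.mk_closure_le_continuum (ht : CountableTightness X)
    (hψ : CountableClosedPseudocharacter X) {S : Set X} (hS : #S ≤ 𝔠) : #(closure S) ≤ 𝔠 := by
  have hcover : closure S ⊆ ⋃ B : {B : Set X // B ⊆ S ∧ B.Countable}, closure B.1 :=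
    fun x hx => by
      obtain ⟨B, hBS, hBc, hxB⟩ := ht S x hx
      exact mem_iUnion.2 ⟨⟨B, hBS, hBc⟩, hxB⟩
  calc #(closure S) ≤ #(⋃ B : {B : Set X // B ⊆ S ∧ B.Countable}, closure B.1) :=
        mk_le_mk_of_subset hcover
    _ ≤ 𝔠 * 𝔠 := (mk_iUnion_le _).trans <| mul_le_mul' (mk_countable_subsets_le_continuum hS)
        (ciSup_le' fun B => hψ.mk_closure_le_continuum B.2.2)
    _ = 𝔠 := mul_eq_self aleph0_le_continuum

end Topology

section ClosingOff

variable {X : Type u} [TopologicalSpace X] [Nonempty X] (V : X → ℕ → Set X)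

noncomputable def closingOff (S : Set X) : Set X :=
  closure S ∪ (fun 𝒰 : Set (Set X) => Classical.epsilon (· ∉ ⋃₀ 𝒰)) ''
    {𝒰 | 𝒰 ⊆ ⋃ x ∈ S, range (V x) ∧ 𝒰.Countable}

theorem closingOff_mono : Monotone (closingOff V) := fun _ _ hST =>
  union_subset_union (closure_mono hST) <|
    image_mono fun _ h𝒰 => ⟨h𝒰.1.trans (biUnion_subset_biUnion_left hST), h𝒰.2⟩

theorem mk_closingOff_le (ht : CountableTightness X) (hψ : CountableClosedPseudocharacter X)
    {S : Set X} (hS : #S ≤ 𝔠) : #(closingOff V S) ≤ 𝔠 := by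
  have hcentred : #(⋃ x ∈ S, range (V x)) ≤ 𝔠 :=
    calc #(⋃ x ∈ S, range (V x)) ≤ #S * ⨆ x : S, #(range (V x)) := mk_biUnion_le _ _
      _ ≤ 𝔠 * 𝔠 := mul_le_mul' hS <|
          ciSup_le' fun x => (countable_range _).le_aleph0.trans aleph0_le_continuum
      _ = 𝔠 := mul_eq_self aleph0_le_continuum
  calc #(closingOff V S) ≤ 𝔠 + 𝔠 := (mk_union_le _ _).trans <|
        add_le_add (ht.mk_closure_le_continuum hψ hS)
          (mk_image_le.trans (mk_countable_subsets_le_continuum hcentred))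
    _ = 𝔠 := add_eq_self aleph0_le_continuum

end ClosingOff

theorem LindelofSpace.mk_le_continuum {X : Type u} [TopologicalSpace X] [T2Space X]
    [LindelofSpace X] (hψ : CountablePseudocharacter X) (ht : CountableTightness X) :
    #X ≤ 𝔠 := by
  cases isEmpty_or_nonempty X
  · simp
  obtain ⟨V, c, hV, hc⟩ := hψ.exists_seq
  obtain ⟨Y, hYcard, hY⟩ := exists_mk_le_forall_countable_apply_subset aleph0_lt_continuum
    (closingOff_mono V) fun S => mk_closingOff_le V ht hψ.countableClosedPseudocharacter
  have hYclosed : IsClosed Y := isClosed_of_closure_subset fun x hx => by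
    obtain ⟨B, hBY, hBc, hxB⟩ := ht Y x hx
    exact hY B hBY hBc (Or.inl hxB)
  have hYuniv : Y = Set.univ := by
    refine eq_univ_of_forall fun y => by_contra fun hy => ?_
    obtain ⟨t, htc, htY, hYt⟩ := hYclosed.isLindelof.elim_nhds_subcover
      (fun x => V x (c x y)) fun x _ => (hV x _).1.mem_nhds (hV x _).2
    set 𝒰 := (fun x => V x (c x y)) '' t
    have hY𝒰 : Y ⊆ ⋃₀ 𝒰 := sUnion_image _ _ ▸ hYt
    have hy𝒰 : y ∉ ⋃₀ 𝒰 := by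
      simp only [𝒰, sUnion_image, mem_iUnion₂, not_exists]
      exact fun x hx => hc x y (ne_of_mem_of_not_mem (htY x hx) hy).symm
    have hout : Classical.epsilon (· ∉ ⋃₀ 𝒰) ∈ Y := hY t htY htc <| Or.inr
      ⟨𝒰, ⟨image_subset_iff.2 fun x hx => mem_biUnion hx (mem_range_self _), htc.image _⟩, rfl⟩
    exact Classical.epsilon_spec (p := (· ∉ ⋃₀ 𝒰)) ⟨y, hy𝒰⟩ (hY𝒰 hout)
  rw [← mk_univ, ← hYuniv]
  exact hYcard

theorem AlmostDiscretelyLindelof.mk_le_continuum_of_discreteTopology {X : Type u}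
    [TopologicalSpace X] [T2Space X] (hadl : AlmostDiscretelyLindelof X)
    (hψ : CountablePseudocharacter X) (ht : CountableTightness X) {D : Set X}
    (hD : DiscreteTopology D) : #D ≤ 𝔠 := by
  obtain ⟨L, hDL, hL⟩ := hadl D hD
  have := isLindelof_iff_lindelofSpace.mp hL
  exact (mk_le_mk_of_subset hDL).trans
    (LindelofSpace.mk_le_continuum (hψ.subtype L) (ht.subtype L))

section GreedySeq

variable {T C I : Type u} [LinearOrder T] [WellFoundedLT T] [LinearOrder I] [WellFoundedLT I]
  (f : T → T → C) (t₀ : T)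

def greedyCandidates (y : T) (s : I → T) (w : I) : Set T :=
  {t | ∀ v < w, f (s v) t = f (s v) y ∧ t ≠ s v}

open Classical in
/-- The default value `t₀` is used when there is no candidate; it must not depend on `y`, or
`greedySeq_congr` would fail. -/
noncomputable def greedySeq (y : T) : I → T :=
  WellFoundedLT.fix fun w s =>
    if h : {t | ∀ v (hv : v < w), f (s v hv) t = f (s v hv) y ∧ t ≠ s v hv}.Nonempty then
      wellFounded_lt.min _ h else t₀

open Classical in
theorem greedySeq_eq (y : T) (w : I) : greedySeq f t₀ y w =
    if h : (greedyCandidates f y (greedySeq f t₀ y) w).Nonempty then wellFounded_lt.min _ h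
    else t₀ :=
  WellFoundedLT.fix_eq _ w

theorem greedySeq_congr {y y' : T} {w : I}
    (h : ∀ v < w, f (greedySeq f t₀ y v) y = f (greedySeq f t₀ y' v) y') :
    greedySeq f t₀ y w = greedySeq f t₀ y' w := by
  induction w using WellFoundedLT.induction with
  | _ w ih =>
    have hcand : greedyCandidates f y (greedySeq f t₀ y) w =
        greedyCandidates f y' (greedySeq f t₀ y') w := by
      ext t
      refine forall₂_congr fun v hv => ?_
      rw [h v hv, ih v hv fun u hu => h u (hu.trans hv)]
    rw [greedySeq_eq f t₀ y, greedySeq_eq f t₀ y', hcand]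

variable {f t₀}

theorem greedySeq_mem_greedyCandidates {y : T} (hy : ∀ w : I, greedySeq f t₀ y w ≠ y) (w : I) :
    greedySeq f t₀ y w ∈ greedyCandidates f y (greedySeq f t₀ y) w := by
  have hne : (greedyCandidates f y (greedySeq f t₀ y) w).Nonempty :=
    ⟨y, fun v _ => ⟨rfl, (hy v).symm⟩⟩
  rw [greedySeq_eq, dif_pos hne]
  exact wellFounded_lt.min_mem _ hne

theorem greedySeq_strictMono {y : T} (hy : ∀ w : I, greedySeq f t₀ y w ≠ y) :
    StrictMono (greedySeq f t₀ y : I → T) := by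
  intro v w hvw
  have hw := greedySeq_mem_greedyCandidates hy w
  have hwv : greedySeq f t₀ y w ∈ greedyCandidates f y (greedySeq f t₀ y) v :=
    fun u hu => hw u (hu.trans hvw)
  have hle : greedySeq f t₀ y v ≤ greedySeq f t₀ y w := by
    rw [greedySeq_eq f t₀ y v, dif_pos ⟨_, hwv⟩]
    exact wellFounded_lt.min_le hwv
  exact hle.lt_of_ne (hw v hvw).2.symm

variable (f t₀)

theorem mk_setOf_greedySeq_eq_self_le (w : I) :
    #{y | greedySeq f t₀ y w = y} ≤ #(Iio w → C) := by
  refine mk_le_of_injective (f := fun (y : {y | greedySeq f t₀ y w = y}) (v : Iio w) =>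
    f (greedySeq f t₀ y v.1) y) fun y y' h => Subtype.ext ?_
  calc y.1 = greedySeq f t₀ y w := y.2.symm
    _ = greedySeq f t₀ y' w := greedySeq_congr f t₀ fun v hv => congrFun h ⟨v, hv⟩
    _ = y' := y'.2

end GreedySeq

section ErdosRado

variable {T C : Type u} [LinearOrder T] [WellFoundedLT T] {κ : Cardinal.{u}}

theorem exists_strictMono_endHomogeneous (hκ : ℵ₀ ≤ κ) (hT : 2 ^ κ < #T) (hC : #C ≤ κ)
    (f : T → T → C) : ∃ (s : (succ κ).ord.ToType → T) (c : (succ κ).ord.ToType → C),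
      StrictMono s ∧ ∀ v w, v < w → f (s v) (s w) = c v := by
  obtain ⟨t₀⟩ : Nonempty T := mk_ne_zero_iff.mp (ne_bot_of_gt hT)
  have hcolours (w : (succ κ).ord.ToType) : #(Iio w → C) ≤ 2 ^ κ :=
    calc #(Iio w → C) = #C ^ #(Iio w) := (power_def _ _).symm
      _ ≤ κ ^ κ := (power_le_power_right hC).trans
          (power_le_power_left (aleph0_pos.trans_le hκ).ne' (mk_Iio_succ_ord_toType_le w))
      _ = 2 ^ κ := power_self_eq hκ
  -- A fixed point `greedySeq f t₀ y w = y` is determined by `w` and the colours below `w`.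
  have hfixed : #(⋃ w, {y | greedySeq f t₀ y w = y}) < #T :=
    calc #(⋃ w, {y | greedySeq f t₀ y w = y})
        ≤ #(succ κ).ord.ToType * ⨆ w, #{y | greedySeq f t₀ y w = y} := mk_iUnion_le _
      _ ≤ 2 ^ κ * 2 ^ κ := mul_le_mul' (by rw [mk_ord_toType]; exact succ_le_of_lt (cantor κ))
          (ciSup_le' fun w => (mk_setOf_greedySeq_eq_self_le f t₀ w).trans (hcolours w))
      _ = 2 ^ κ := mul_eq_self (hκ.trans (cantor κ).le)
      _ < #T := hT
  obtain ⟨y, hy⟩ : ∃ y, ∀ w, greedySeq f t₀ y w ≠ y := by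
    by_contra! h
    exact hfixed.not_ge <| (mk_univ (α := T)).ge.trans <|
      mk_le_mk_of_subset fun y _ => mem_iUnion.2 (h y)
  exact ⟨greedySeq f t₀ y, fun v => f (greedySeq f t₀ y v) y, greedySeq_strictMono hy,
    fun v w hvw => (greedySeq_mem_greedyCandidates hy w v hvw).1⟩

theorem exists_homogeneous_of_two_power_lt (hκ : ℵ₀ ≤ κ) (hT : 2 ^ κ < #T) (hC : #C ≤ κ)
    (f : T → T → C) : ∃ H : Set T, κ < #H ∧ ∃ c : C, ∀ a ∈ H, ∀ b ∈ H, a < b → f a b = c := by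
  obtain ⟨s, col, hs, hcol⟩ := exists_strictMono_endHomogeneous hκ hT hC f
  obtain ⟨c, hc⟩ := infinite_pigeonhole_card col (succ κ) (mk_ord_toType _).ge
    (hκ.trans (le_succ κ)) (by rw [(isRegular_succ hκ).cof_ord]; exact hC.trans_lt (lt_succ κ))
  refine ⟨s '' (col ⁻¹' {c}), ?_, c, ?_⟩
  · rw [mk_image_eq hs.injective]
    exact (lt_succ κ).trans_le hc
  · rintro _ ⟨v, hv, rfl⟩ _ ⟨w, -, rfl⟩ hvw
    exact (hcol v w (hs.lt_iff_lt.mp hvw)).trans hv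

end ErdosRado

theorem discreteTopology_image_of_homogeneous {X T : Type*} [TopologicalSpace X] [LinearOrder T]
    {V : X → ℕ → Set X} {c : X → X → ℕ} (hV : ∀ x n, IsOpen (V x n) ∧ x ∈ V x n)
    (hc : ∀ x y, y ≠ x → y ∉ V x (c x y)) {e : T → X} {H : Set T} {m n : ℕ}
    (hH : ∀ a ∈ H, ∀ b ∈ H, a < b → c (e a) (e b) = m ∧ c (e b) (e a) = n) :
    DiscreteTopology (e '' H) := by
  refine discreteTopology_subtype_iff'.2 ?_
  rintro _ ⟨a, ha, rfl⟩
  refine ⟨V (e a) m ∩ V (e a) n, (hV _ _).1.inter (hV _ _).1, Subset.antisymm ?_ ?_⟩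
  · rintro _ ⟨⟨hm, hn⟩, b, hb, rfl⟩
    by_contra hba
    rcases lt_or_gt_of_ne (fun h => hba (congrArg e h) : b ≠ a) with hlt | hlt
    · exact hc _ _ hba ((hH b hb a ha hlt).2 ▸ hn)
    · exact hc _ _ hba ((hH a ha b hb hlt).1 ▸ hm)
  · rintro _ rfl
    exact ⟨⟨(hV _ _).2, (hV _ _).2⟩, a, ha, rfl⟩

/-- An almost discretely Lindelöf Hausdorff space with countable pseudocharacter
and countable tightness has cardinality at most `2 ^ 𝔠`. -/
theorem almostDiscretelyLindelof_card_le
    (X : Type u) [TopologicalSpace X] [T2Space X]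
    (hadl : AlmostDiscretelyLindelof X) (hpsi : CountablePseudocharacter X)
    (ht : CountableTightness X) :
    #X ≤ 2 ^ Cardinal.continuum := by
  by_contra! hX
  obtain ⟨V, c, hV, hc⟩ := hpsi.exists_seq
  obtain ⟨e⟩ : Nonempty ((#X).ord.ToType ≃ X) := Cardinal.eq.mp (mk_ord_toType _)
  obtain ⟨H, hH, ⟨m, n⟩, hmn⟩ := exists_homogeneous_of_two_power_lt aleph0_le_continuum
    (by rwa [mk_ord_toType]) (by simpa using aleph0_le_continuum)
    fun a b => (ULift.up (c (e a) (e b), c (e b) (e a)) : ULift.{u} (ℕ × ℕ))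
  have hD : DiscreteTopology (e '' H) := discreteTopology_image_of_homogeneous hV hc
    fun a ha b hb hab => by simpa using hmn a ha b hb hab
  have hHD := hadl.mk_le_continuum_of_discreteTopology hpsi ht hD
  rw [mk_image_eq e.injective] at hHD
  exact hHD.not_gt hH
end

section
/- Let X be a T1 collectionwise normal space that is weakly linearly Lindelöf. Then X has countable extent, i.e. every closed discrete subset of X is countable. -/
/-!
Let `D` be closed and discrete. Collectionwise normality separates the points of `D` by pairwise
disjoint open sets `G d`; shrinking them inside an open `H ⊇ D` with `closure H ⊆ ⋃ G d` (normality)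
makes `d ↦ G d ∩ H` a discrete family of nonempty open sets. A discrete family has no complete
accumulation point, so if `D` were uncountable, `ℵ₁` members of it would contradict weak linear
Lindelöfness.
-/

open Set Topology Cardinal

universe u

/-- A space is collectionwise normal if every discrete family of pairwise
disjoint closed sets can be separated by a pairwise disjoint family of open
sets. -/
def CollectionwiseNormal (X : Type u) [TopologicalSpace X] : Prop :=
  ∀ {ι : Type u} (F : ι → Set X), (∀ i, IsClosed (F i)) →
    (Pairwise fun i j => Disjoint (F i) (F j)) →
    (∀ x : X, ∃ U : Set X, IsOpen U ∧ x ∈ U ∧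
      {i : ι | (U ∩ F i).Nonempty}.Subsingleton) →
    ∃ G : ι → Set X, (∀ i, IsOpen (G i)) ∧ (∀ i, F i ⊆ G i) ∧
      Pairwise fun i j => Disjoint (G i) (G j)

section DiscreteFamily

variable {ι X : Type*} [TopologicalSpace X]

def IsDiscreteFamily (F : ι → Set X) : Prop :=
  ∀ x : X, ∃ U : Set X, IsOpen U ∧ x ∈ U ∧ {i : ι | (U ∩ F i).Nonempty}.Subsingleton

theorem IsDiscreteFamily.locallyFinite {F : ι → Set X} (hF : IsDiscreteFamily F) :
    LocallyFinite F := by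
  intro x
  obtain ⟨U, hU, hxU, hsub⟩ := hF x
  refine ⟨U, hU.mem_nhds hxU, hsub.finite.subset fun i hi => ?_⟩
  rwa [mem_ofPred_eq, inter_comm]

theorem IsDiscreteFamily.injective {F : ι → Set X} (hF : IsDiscreteFamily F)
    (hne : ∀ i, (F i).Nonempty) : Function.Injective F := by
  intro i j hij
  obtain ⟨x, hx⟩ := hne i
  obtain ⟨U, -, hxU, hsub⟩ := hF x
  exact hsub ⟨x, hxU, hx⟩ ⟨x, hxU, hij ▸ hx⟩

theorem isDiscreteFamily_singleton_of_isClosed_of_isDiscrete {D : Set X} (hD : IsClosed D)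
    (hd : IsDiscrete D) : IsDiscreteFamily fun d : D => ({d.1} : Set X) := by
  intro x
  have hx : Dᶜ ∈ 𝓝[≠] x :=
    Filter.disjoint_principal_right.mp (isClosed_and_discrete_iff.mp ⟨hD, hd⟩ x)
  obtain ⟨U, hU, hxU, hUD⟩ := mem_nhdsWithin.mp hx
  have hUD' : U ∩ D ⊆ {x} := fun y ⟨hyU, hyD⟩ => by_contra fun hyx => hUD ⟨hyU, hyx⟩ hyD
  refine ⟨U, hU, hxU, fun d hd e he => Subtype.ext ?_⟩
  obtain ⟨_, hdU, rfl⟩ := hd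
  obtain ⟨_, heU, rfl⟩ := he
  exact (hUD' ⟨hdU, d.2⟩).trans (hUD' ⟨heU, e.2⟩).symm

theorem isDiscreteFamily_inter_of_closure_subset_iUnion {G : ι → Set X} (hG : ∀ i, IsOpen (G i))
    (hdisj : Pairwise fun i j => Disjoint (G i) (G j)) {H : Set X}
    (hH : closure H ⊆ ⋃ i, G i) : IsDiscreteFamily fun i => G i ∩ H := by
  intro x
  by_cases hx : ∃ j, x ∈ G j
  · obtain ⟨j, hxj⟩ := hx
    refine ⟨G j, hG j, hxj, fun i hi k hk => ?_⟩
    have key : ∀ {i}, (G j ∩ (G i ∩ H)).Nonempty → i = j := fun {i} ⟨_, hyj, hyi, _⟩ =>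
      by_contra fun hij => disjoint_left.mp (hdisj hij) hyi hyj
    exact (key hi).trans (key hk).symm
  · have hxH : x ∉ closure H := fun h => hx (mem_iUnion.mp (hH h))
    refine ⟨(closure H)ᶜ, isClosed_closure.isOpen_compl, hxH, fun i hi => ?_⟩
    obtain ⟨_, hy, -, hyH⟩ := hi
    exact (hy (subset_closure hyH)).elim

end DiscreteFamily

section CollectionwiseNormal

variable {X : Type u} [TopologicalSpace X]

theorem CollectionwiseNormal.normalSpace (hX : CollectionwiseNormal X) : NormalSpace X := by
  refine ⟨fun s t hs ht hst => ?_⟩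
  let F : ULift.{u} Bool → Set X := fun b => cond b.down s t
  have hF : IsDiscreteFamily F := by
    intro x
    by_cases hxs : x ∈ s
    · refine ⟨tᶜ, ht.isOpen_compl, disjoint_left.mp hst hxs, ?_⟩
      rintro ⟨_ | _⟩ ⟨_, hy, hyt⟩ ⟨_ | _⟩ ⟨_, hz, hzt⟩
      all_goals first | rfl | exact (hy hyt).elim | exact (hz hzt).elim
    · refine ⟨sᶜ, hs.isOpen_compl, hxs, ?_⟩
      rintro ⟨_ | _⟩ ⟨_, hy, hys⟩ ⟨_ | _⟩ ⟨_, hz, hzs⟩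
      all_goals first | rfl | exact (hy hys).elim | exact (hz hzs).elim
  obtain ⟨G, hGo, hFG, hGd⟩ := hX F (by rintro ⟨_ | _⟩ <;> assumption)
    (by rintro ⟨_ | _⟩ ⟨_ | _⟩ h <;> first | exact (h rfl).elim | exact hst.symm | exact hst) hF
  exact ⟨G ⟨true⟩, G ⟨false⟩, hGo _, hGo _, hFG ⟨true⟩, hFG ⟨false⟩, hGd (by simp)⟩

theorem CollectionwiseNormal.exists_isDiscreteFamily_isOpen_superset
    (hX : CollectionwiseNormal X) {ι : Type u} {F : ι → Set X} (hF : ∀ i, IsClosed (F i))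
    (hdisj : Pairwise fun i j => Disjoint (F i) (F j)) (hdisc : IsDiscreteFamily F) :
    ∃ U : ι → Set X, (∀ i, IsOpen (U i)) ∧ (∀ i, F i ⊆ U i) ∧ IsDiscreteFamily U := by
  have := hX.normalSpace
  obtain ⟨G, hGo, hFG, hGd⟩ := hX F hF hdisj hdisc
  obtain ⟨H, hHo, hFH, hHG⟩ := normal_exists_closure_subset (hdisc.locallyFinite.isClosed_iUnion hF)
    (isOpen_iUnion hGo) (iUnion_mono hFG)
  exact ⟨fun i => G i ∩ H, fun i => (hGo i).inter hHo,
    fun i => subset_inter (hFG i) ((subset_iUnion F i).trans hFH),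
    isDiscreteFamily_inter_of_closure_subset_iUnion hGo hGd hHG⟩

end CollectionwiseNormal

theorem WeaklyLinearlyLindelof.countable_of_isDiscreteFamily {X ι : Type u} [TopologicalSpace X]
    (hX : WeaklyLinearlyLindelof X) {U : ι → Set X} (hUo : ∀ i, IsOpen (U i))
    (hne : ∀ i, (U i).Nonempty) (hU : IsDiscreteFamily U) : Countable ι := by
  by_contra hι
  obtain ⟨S, hS⟩ := le_mk_iff_exists_set.mp
    (aleph_one_le_iff.mpr (aleph0_lt_mk_iff.mpr (not_countable_iff.mp hι)))
  have hcard : #(U '' S) = ℵ₁ := (mk_image_eq (hU.injective hne)).trans hS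
  obtain ⟨p, hp⟩ := hX (U '' S) (by rintro _ ⟨i, -, rfl⟩; exact ⟨hUo i, hne i⟩)
    (hcard ▸ isRegular_aleph_one) (hcard ▸ aleph0_lt_aleph_one)
  obtain ⟨V, hV, hpV, hsub⟩ := hU p
  have hmeet : {W ∈ U '' S | (W ∩ V).Nonempty} ⊆ U '' {i | (V ∩ U i).Nonempty} := by
    rintro _ ⟨⟨i, -, rfl⟩, hi⟩
    exact ⟨i, by rwa [mem_ofPred_eq, inter_comm], rfl⟩
  have hle : #{W ∈ U '' S | (W ∩ V).Nonempty} ≤ 1 :=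
    mk_le_one_iff_set_subsingleton.mpr ((hsub.image U).anti hmeet)
  rw [hp V hV hpV, hcard] at hle
  exact hle.not_gt (one_lt_aleph0.trans aleph0_lt_aleph_one)

theorem collectionwiseNormal_weaklyLinearlyLindelof_countable_extent_general
    (X : Type u) [TopologicalSpace X]
    (hcwn : CollectionwiseNormal X) (hwll : WeaklyLinearlyLindelof X) :
    ∀ D : Set X, IsClosed D → DiscreteTopology D → D.Countable := by
  intro D hD hDt
  have hd : IsDiscrete D := ⟨hDt⟩
  obtain ⟨U, hUo, hDU, hU⟩ := hcwn.exists_isDiscreteFamily_isOpen_superset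
    (F := fun d : D => ({d.1} : Set X))
    (fun d => isClosed_of_subset_discrete_closed (singleton_subset_iff.mpr d.2) hd hD)
    (fun d e hde => disjoint_singleton.mpr (Subtype.coe_injective.ne hde))
    (isDiscreteFamily_singleton_of_isClosed_of_isDiscrete hD hd)
  exact countable_coe_iff.mp (hwll.countable_of_isDiscreteFamily hUo (fun d => ⟨d, hDU d rfl⟩) hU)

/-- A collectionwise normal weakly linearly Lindelöf T1 space has countable
extent: every closed discrete subset is countable. -/
theorem collectionwiseNormal_weaklyLinearlyLindelof_countable_extent
    (X : Type u) [TopologicalSpace X] [T1Space X]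
    (hcwn : CollectionwiseNormal X) (hwll : WeaklyLinearlyLindelof X) :
    ∀ D : Set X, IsClosed D → DiscreteTopology D → D.Countable :=
  collectionwiseNormal_weaklyLinearlyLindelof_countable_extent_general X hcwn hwll
end

section
/- Let X be a T1 collectionwise normal space, let Y be a dense subspace of X, and let κ be an infinite cardinal such that every closed discrete subset of Y (closed in Y, discrete in the subspace topology) has cardinality at most κ. Then every closed discrete subset of X has cardinality at most κ. -/
open Set Topology Cardinal

universe u

/-- Collectionwise normality implies we can separate two disjoint closed sets. -/
lemma cwn_normal {X : Type u} [TopologicalSpace X] (h : CollectionwiseNormal X)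
    {A B : Set X} (hA : IsClosed A) (hB : IsClosed B) (hAB : Disjoint A B) :
    ∃ V W : Set X, IsOpen V ∧ IsOpen W ∧ A ⊆ V ∧ B ⊆ W ∧ Disjoint V W := by
  obtain ⟨G, hGo, hGs, hGd⟩ := h (ι := ULift Bool)
    (fun b => if b.down then A else B)
    (by rintro ⟨b⟩; cases b <;> simpa)
    (by
      rintro ⟨b⟩ ⟨c⟩ hbc
      cases b <;> cases c <;> simp_all [hAB, hAB.symm])
    (by
      intro x
      by_cases hx : x ∈ B
      · refine ⟨Aᶜ, hA.isOpen_compl, fun hxa => hAB.ne_of_mem hxa hx rfl, ?_⟩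
        rintro ⟨b⟩ hb ⟨c⟩ hc
        cases b <;> cases c <;> simp_all [Set.Nonempty]
      · refine ⟨Bᶜ, hB.isOpen_compl, hx, ?_⟩
        rintro ⟨b⟩ hb ⟨c⟩ hc
        cases b <;> cases c <;> simp_all [Set.Nonempty])
  exact ⟨G ⟨true⟩, G ⟨false⟩, hGo _, hGo _, by simpa using hGs ⟨true⟩,
    by simpa using hGs ⟨false⟩, hGd (by simp)⟩

/-- In a collectionwise normal T1 space, the extent is at most the extent of any
dense subspace: if every closed discrete subset of a dense subspace `Y` has
cardinality at most `κ`, the same holds for `X`. -/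
theorem collectionwiseNormal_extent_le_dense
    (X : Type u) [TopologicalSpace X] [T1Space X] (hcwn : CollectionwiseNormal X)
    (Y : Set X) (hdense : Dense Y) (κ : Cardinal.{u}) (hκ : ℵ₀ ≤ κ)
    (hY : ∀ D : Set ↥Y, IsClosed D → DiscreteTopology D → #↥D ≤ κ) :
    ∀ D : Set X, IsClosed D → DiscreteTopology D → #↥D ≤ κ := by
  intro D hD hDdisc
  -- Step 1: separate the singletons of D by pairwise disjoint open sets
  obtain ⟨G, hGo, hGs, hGd⟩ := hcwn (ι := ↥D) (fun x => {(x : X)})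
    (fun x => isClosed_singleton)
    (by
      intro x x' hxx'
      simp only [Set.disjoint_singleton]
      exact fun h => hxx' (Subtype.ext h))
    (by
      intro p
      by_cases hp : p ∈ D
      · -- p is isolated in D
        have h1 : IsOpen ({(⟨p, hp⟩ : ↥D)} : Set ↥D) := isOpen_discrete _
        rw [isOpen_induced_iff] at h1
        obtain ⟨U, hUo, hU⟩ := h1
        have hpU : p ∈ U := by
          have : (⟨p, hp⟩ : ↥D) ∈ Subtype.val ⁻¹' U := by rw [hU]; rfl
          exact this
        refine ⟨U, hUo, hpU, ?_⟩
        intro x hx x' hx'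
        obtain ⟨z, hzU, hz⟩ := hx
        obtain ⟨z', hz'U, hz'⟩ := hx'
        simp only [mem_singleton_iff] at hz hz'
        subst hz hz'
        have e1 : x = ⟨p, hp⟩ := by
          have : x ∈ Subtype.val ⁻¹' U := hzU
          rw [hU] at this; exact this
        have e2 : x' = ⟨p, hp⟩ := by
          have : x' ∈ Subtype.val ⁻¹' U := hz'U
          rw [hU] at this; exact this
        rw [e1, e2]
      · refine ⟨Dᶜ, hD.isOpen_compl, hp, ?_⟩
        intro x hx
        exfalso
        obtain ⟨z, hzU, hz⟩ := hx
        simp only [mem_singleton_iff] at hz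
        subst hz
        exact hzU x.2)
  -- Step 2: shrink using normality to get a discrete family of open sets
  have hDsub : D ⊆ ⋃ x, G x := fun p hp =>
    mem_iUnion.2 ⟨⟨p, hp⟩, hGs ⟨p, hp⟩ rfl⟩
  obtain ⟨V, W, hVo, hWo, hDV, hBW, hVW⟩ := cwn_normal hcwn hD
    (isClosed_compl_iff.2 (isOpen_iUnion hGo))
    (disjoint_compl_right_iff_subset.2 hDsub)
  have hclV : closure V ⊆ ⋃ x, G x := by
    have h1 : closure V ⊆ Wᶜ :=
      closure_minimal (hVW.subset_compl_right) hWo.isClosed_compl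
    exact h1.trans (compl_subset_comm.1 hBW)
  set H : ↥D → Set X := fun x => G x ∩ V with hHdef
  have hHo : ∀ x, IsOpen (H x) := fun x => (hGo x).inter hVo
  have hHd : Pairwise fun x x' => Disjoint (H x) (H x') := fun x x' h =>
    ((hGd h).mono inter_subset_left inter_subset_left)
  have hxH : ∀ x : ↥D, (x : X) ∈ H x := fun x =>
    ⟨hGs x rfl, hDV x.2⟩
  -- the family H is discrete
  have hdiscr : ∀ z : X, ∃ U : Set X, IsOpen U ∧ z ∈ U ∧
      {x : ↥D | (U ∩ H x).Nonempty}.Subsingleton := by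
    intro z
    by_cases hz : z ∈ closure V
    · obtain ⟨x₀, hx₀⟩ := mem_iUnion.1 (hclV hz)
      refine ⟨G x₀, hGo x₀, hx₀, ?_⟩
      intro x hx x' hx'
      obtain ⟨w, hw1, hw2, _⟩ := hx
      obtain ⟨w', hw'1, hw'2, _⟩ := hx'
      have e1 : x = x₀ := by
        by_contra h
        exact Set.disjoint_left.1 (hGd h) hw2 hw1
      have e2 : x' = x₀ := by
        by_contra h
        exact Set.disjoint_left.1 (hGd h) hw'2 hw'1
      rw [e1, e2]
    · refine ⟨(closure V)ᶜ, isClosed_closure.isOpen_compl, hz, ?_⟩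
      intro x hx
      exfalso
      obtain ⟨w, hw1, _, hw2⟩ := hx
      exact hw1 (subset_closure hw2)
  -- Step 3: pick points of Y in each H x
  have hpick : ∀ x : ↥D, ∃ yy : X, yy ∈ H x ∧ yy ∈ Y := by
    intro x
    obtain ⟨yy, hy1, hy2⟩ := hdense.inter_open_nonempty (H x) (hHo x) ⟨x, hxH x⟩
    exact ⟨yy, hy1, hy2⟩
  choose y hyH hyY using hpick
  have hyinj : Function.Injective y := by
    intro x x' h
    by_contra hne
    exact Set.disjoint_left.1 (hHd hne) (hyH x) (h ▸ hyH x')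
  set E : Set X := Set.range y with hEdef
  have hEuniq : ∀ (x x' : ↥D), y x' ∈ H x → x' = x := by
    intro x x' hmem
    by_contra hne
    exact Set.disjoint_left.1 (hHd hne) (hyH x') hmem
  have hEclosed : IsClosed E := by
    rw [← isOpen_compl_iff, isOpen_iff_mem_nhds]
    intro z hz
    obtain ⟨U, hUo, hzU, hUsub⟩ := hdiscr z
    by_cases hcase : ∃ x : ↥D, y x ∈ U
    · obtain ⟨x₀, hx₀⟩ := hcase
      have hzy : z ≠ y x₀ := fun h => hz ⟨x₀, h.symm⟩
      have hmem2 : U \ {y x₀} ∈ 𝓝 z :=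
        (hUo.sdiff isClosed_singleton).mem_nhds ⟨hzU, hzy⟩
      refine Filter.mem_of_superset hmem2 ?_
      rintro w ⟨hwU, hwne⟩ ⟨x, rfl⟩
      have h1 : x ∈ {i : ↥D | (U ∩ H i).Nonempty} := ⟨y x, hwU, hyH x⟩
      have h2 : x₀ ∈ {i : ↥D | (U ∩ H i).Nonempty} := ⟨y x₀, hx₀, hyH x₀⟩
      exact hwne (mem_singleton_iff.2 (congrArg y (hUsub h1 h2)))
    · refine Filter.mem_of_superset (hUo.mem_nhds hzU) ?_
      rintro w hwU ⟨x, rfl⟩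
      exact hcase ⟨x, hwU⟩
  set y' : ↥D → ↥Y := fun x => ⟨y x, hyY x⟩ with hy'def
  have hy'inj : Function.Injective y' := fun x x' h =>
    hyinj (congrArg Subtype.val h)
  set E' : Set ↥Y := Set.range y' with hE'def
  have hE'pre : E' = Subtype.val ⁻¹' E := by
    ext z
    constructor
    · rintro ⟨x, rfl⟩; exact ⟨x, rfl⟩
    · rintro ⟨x, hx⟩; exact ⟨x, Subtype.ext hx⟩
  have hE'closed : IsClosed E' := by
    rw [hE'pre]
    exact hEclosed.preimage continuous_subtype_val
  have hE'disc : DiscreteTopology ↥E' := by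
    rw [discreteTopology_subtype_iff]
    intro z hz
    obtain ⟨x, rfl⟩ := hz
    rw [← Filter.empty_mem_iff_bot]
    have hU' : (Subtype.val ⁻¹' (H x) : Set ↥Y) ∈ 𝓝 (y' x) :=
      ((hHo x).preimage continuous_subtype_val).mem_nhds (by
        show (y' x : X) ∈ H x
        exact hyH x)
    have h1 : (Subtype.val ⁻¹' (H x) : Set ↥Y) ∈ 𝓝[≠] (y' x) :=
      mem_nhdsWithin_of_mem_nhds hU'
    have h2 : ({y' x}ᶜ : Set ↥Y) ∈ 𝓝[≠] (y' x) := self_mem_nhdsWithin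
    have h3 : E' ∈ Filter.principal E' := Filter.mem_principal_self E'
    have hset : ((Subtype.val ⁻¹' (H x) : Set ↥Y) ∩ {y' x}ᶜ) ∩ E' = ∅ := by
      rw [Set.eq_empty_iff_forall_notMem]
      rintro w ⟨⟨hw1, hw2⟩, x', rfl⟩
      exact hw2 (mem_singleton_iff.2 (congrArg y' (hEuniq x x' hw1)))
    rw [← hset]
    exact Filter.inter_mem_inf (Filter.inter_mem h1 h2) h3
  calc #↥D = #↥E' := (Cardinal.mk_range_eq y' hy'inj).symm
    _ ≤ κ := hY E' hE'closed hE'disc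
end

section
/- Let X be a regular T1 space such that the co-diagonal Δ^c_X = (X × X) \ Δ_X is discretely Lindelöf. Then X has a small diagonal. -/
open Set Topology Cardinal

universe u

/-- `X` has a small diagonal if every uncountable subset of the co-diagonal has
an uncountable subset whose closure misses the diagonal. -/
def HasSmallDiagonal (X : Type u) [TopologicalSpace X] : Prop :=
  ∀ A : Set (X × X), A ⊆ codiag X → ¬ A.Countable →
    ∃ B ⊆ A, ¬ B.Countable ∧ closure B ∩ {p : X × X | p.1 = p.2} = ∅

/-!
Since `X` is regular and Hausdorff, every point of the open set `Δᶜ` has a closed neighbourhood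
inside `Δᶜ`; if some such neighbourhood `t` meets an uncountable `A ⊆ Δᶜ` in an uncountable
set, then `B = A ∩ t` witnesses the small diagonal. So it suffices to show that in a
discretely Lindelöf space `Z` a set `A` that is countable near every point of `Z` is countable.

For this, choose by Zorn a maximal family of points `a ∈ A` with open neighbourhoods `V_a`
meeting `A` countably, such that no `V_a` contains another chosen point. The chosen points
form a discrete set `D`, and by maximality `A ⊆ closure D ∪ ⋃ V_a`. The closure of `D` is
Lindelöf, so it meets `A` countably; in particular `D ⊆ A` is countable, and then so is the
union of the `V_a ∩ A`.
-/

lemma injOn_fst_of_pairwise_notMem {α : Type*} {F : Set (α × Set α)} (hmem : ∀ q ∈ F, q.1 ∈ q.2)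
    (hsep : F.Pairwise fun q q' => q'.1 ∉ q.2) : InjOn Prod.fst F := by
  intro q hq q' hq' h
  by_contra hne
  exact hsep hq hq' hne (by rw [← h]; exact hmem q hq)

section SeparatedCover

variable {Z : Type*} [TopologicalSpace Z]

lemma discreteTopology_fst_image_of_pairwise_notMem {F : Set (Z × Set Z)}
    (hopen : ∀ q ∈ F, IsOpen q.2) (hmem : ∀ q ∈ F, q.1 ∈ q.2)
    (hsep : F.Pairwise fun q q' => q'.1 ∉ q.2) : DiscreteTopology (Prod.fst '' F) := by
  rw [discreteTopology_subtype_iff']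
  rintro _ ⟨q, hq, rfl⟩
  refine ⟨q.2, hopen q hq, subset_antisymm ?_ (singleton_subset_iff.2 ⟨hmem q hq, q, hq, rfl⟩)⟩
  rintro _ ⟨hq'V, q', hq', rfl⟩
  by_contra hne
  exact hsep hq hq' (by rintro rfl; exact hne rfl) hq'V

lemma exists_pairwise_notMem_cover (A : Set Z) (P : Set Z → Prop)
    (hP : ∀ ⦃U V⦄, V ⊆ U → P U → P V) (hA : ∀ a ∈ A, ∃ U ∈ 𝓝 a, P U) :
    ∃ F : Set (Z × Set Z), (∀ q ∈ F, q.1 ∈ A ∧ IsOpen q.2 ∧ q.1 ∈ q.2 ∧ P q.2) ∧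
      F.Pairwise (fun q q' => q'.1 ∉ q.2) ∧ A ⊆ closure (Prod.fst '' F) ∪ ⋃ q ∈ F, q.2 := by
  set G := {q : Z × Set Z | q.1 ∈ A ∧ IsOpen q.2 ∧ q.1 ∈ q.2 ∧ P q.2}
  obtain ⟨F, ⟨hFG, hsep⟩, hmax⟩ :
      ∃ F, Maximal (fun F => F ⊆ G ∧ F.Pairwise fun q q' => q'.1 ∉ q.2) F :=
    zorn_subset _ fun c hc hchain => ⟨⋃₀ c,
      ⟨sUnion_subset fun F hF => (hc hF).1, hchain.pairwise_sUnion.2 fun F hF => (hc hF).2⟩,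
      fun F hF => subset_sUnion_of_mem hF⟩
  refine ⟨F, hFG, hsep, fun a ha => ?_⟩
  by_contra hcover
  simp only [mem_union, mem_iUnion, not_or, not_exists] at hcover
  obtain ⟨ha_closure, ha_cover⟩ := hcover
  obtain ⟨U, hU, hPU⟩ := hA a ha
  set V := interior U \ closure (Prod.fst '' F)
  have haV : a ∈ V := ⟨mem_interior_iff_mem_nhds.2 hU, ha_closure⟩
  have hnew : insert (a, V) F ⊆ G ∧ (insert (a, V) F).Pairwise fun q q' => q'.1 ∉ q.2 :=
    ⟨insert_subset ⟨ha, isOpen_interior.sdiff isClosed_closure, haV,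
      hP (sdiff_subset.trans interior_subset) hPU⟩ hFG,
      hsep.insert fun q hq _ =>
        ⟨fun hqV => hqV.2 (subset_closure (mem_image_of_mem _ hq)), ha_cover q hq⟩⟩
  exact ha_cover (a, V) (hmax hnew (subset_insert _ _) (mem_insert _ _)) haV

end SeparatedCover

theorem DiscretelyLindelof.countable_of_forall_exists_nhds {Z : Type u} [TopologicalSpace Z]
    (hZ : DiscretelyLindelof Z) {A : Set Z} (hA : ∀ z, ∃ U ∈ 𝓝 z, (A ∩ U).Countable) :
    A.Countable := by
  obtain ⟨F, hF, hsep, hcover⟩ := exists_pairwise_notMem_cover A (fun U => (A ∩ U).Countable)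
    (fun _ _ hVU hU => hU.mono (inter_subset_inter_right A hVU)) fun a _ => hA a
  set D := Prod.fst '' F
  have hDA : D ⊆ A := image_subset_iff.2 fun q hq => (hF q hq).1
  have hmem : ∀ q ∈ F, q.1 ∈ q.2 := fun q hq => (hF q hq).2.2.1
  have hA_closure : (A ∩ closure D).Countable :=
    (hZ D (discreteTopology_fst_image_of_pairwise_notMem (fun q hq => (hF q hq).2.1) hmem
      hsep)).induction_on (p := fun s => (A ∩ s).Countable)
      (fun _ _ hst ht => ht.mono (inter_subset_inter_right A hst))
      (fun S hS hSc => by rw [sUnion_eq_biUnion, inter_iUnion₂]; exact hS.biUnion hSc)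
      fun z _ => by
        obtain ⟨U, hU, hUc⟩ := hA z
        exact ⟨U, mem_nhdsWithin_of_mem_nhds hU, hUc⟩
  have hF_countable : F.Countable :=
    (mapsTo_image Prod.fst F).countable_of_injOn (injOn_fst_of_pairwise_notMem hmem hsep)
      (hA_closure.mono (subset_inter hDA subset_closure))
  have hA_sub : A ⊆ (A ∩ closure D) ∪ ⋃ q ∈ F, A ∩ q.2 := fun a ha => by
    rcases hcover ha with h | h
    · exact Or.inl ⟨ha, h⟩
    · obtain ⟨q, hq, haq⟩ := mem_iUnion₂.1 h
      exact Or.inr (mem_iUnion₂.2 ⟨q, hq, ha, haq⟩)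
  exact (hA_closure.union (hF_countable.biUnion fun q hq => (hF q hq).2.2.2)).mono hA_sub

/-- If `X` is regular T1 and its co-diagonal is discretely Lindelöf, then `X`
has a small diagonal. -/
theorem codiag_discretelyLindelof_smallDiagonal
    (X : Type u) [TopologicalSpace X] [T1Space X] [RegularSpace X]
    (h : DiscretelyLindelof ↥(codiag X)) :
    HasSmallDiagonal X := by
  intro A hA_codiag hA
  by_contra! hsmall
  have hopen : IsOpen (codiag X) := isClosed_diagonal.isOpen_compl
  have hlocal : ∀ z : codiag X, ∃ U ∈ 𝓝 z, (Subtype.val ⁻¹' A ∩ U).Countable := by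
    intro z
    obtain ⟨t, ht, ht_closed, ht_codiag⟩ := exists_mem_nhds_isClosed_subset (hopen.mem_nhds z.2)
    refine ⟨Subtype.val ⁻¹' t, continuous_subtype_val.continuousAt.preimage_mem_nhds ht, ?_⟩
    have hAt : (A ∩ t).Countable := by
      by_contra hAt
      obtain ⟨p, hp, hp_diag⟩ := hsmall (A ∩ t) inter_subset_left hAt
      exact ht_codiag (closure_minimal inter_subset_right ht_closed hp) hp_diag
    exact hAt.preimage Subtype.val_injective
  refine hA (((h.countable_of_forall_exists_nhds hlocal).image Subtype.val).mono ?_)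
  rw [Subtype.image_preimage_coe]
  exact subset_inter hA_codiag subset_rfl
end
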